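/- arXiv:2601.10845 — 18 statements merged into one kernel-verified Lean document; each statement's English description precedes it below -/
import Mathlib

section
/- Let F be a finite field with m elements and characteristic 2, let n ≥ 1 be an integer, and let d = gcd(n, m-1). In the n-total graph n-TG(F, {0}) the following hold: (i) two distinct nonzero vertices x, y are adjacent if and only if x^n = y^n; (ii) for every nonzero a ∈ F, the set {b ∈ F : b ≠ 0 and b^n = a^n} has exactly d elements; and (iii) the vertex 0 is adjacent to no other vertex. Consequently n-TG(F,{0}) is a disjoint union of (m-1)/d complete graphs K_d together with the isolated vertex 0. -/
/-- The `n`-total graph of a commutative ring `R` with respect to a subset `D ⊆ R`: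
two distinct vertices `x, y` are adjacent iff `x ^ n + y ^ n ∈ D`. -/
def nTotalGraph {R : Type*} [CommRing R] (D : Set R) (n : ℕ) : SimpleGraph R where
  Adj x y := x ≠ y ∧ x ^ n + y ^ n ∈ D
  symm := ⟨fun x y ⟨h, hd⟩ => ⟨h.symm, by rwa [add_comm]⟩⟩
  loopless := ⟨fun x ⟨h, _⟩ => h rfl⟩

open Subgroup in
lemma aux_units_count (F : Type*) [Field F] [Fintype F] [Fintype Fˣ] [DecidableEq Fˣ]
    (n : ℕ) (hn : 0 < n) :
    (Finset.univ.filter (fun u : Fˣ => u ^ n = 1)).card = Nat.gcd n (Fintype.card Fˣ) := by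
  set N := Fintype.card Fˣ with hN
  have hN0 : 0 < N := Fintype.card_pos
  set D := Nat.gcd n N with hD
  have hD0 : 0 < D := Nat.gcd_pos_of_pos_left _ hn
  have hDdvd : D ∣ N := Nat.gcd_dvd_right _ _
  obtain ⟨g, hg⟩ := IsCyclic.exists_generator (α := Fˣ)
  have horder : orderOf g = N := by
    rw [hN, ← Nat.card_eq_fintype_card]
    exact orderOf_eq_card_of_forall_mem_zpowers hg
  -- rewrite the filter condition
  have hiff : ∀ u : Fˣ, u ^ n = 1 ↔ u ^ D = 1 := fun u => by
    rw [hD, pow_gcd_eq_one]; exact ⟨fun h => ⟨h, pow_card_eq_one⟩, fun h => h.1⟩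
  have hfe : (Finset.univ.filter (fun u : Fˣ => u ^ n = 1))
      = (Finset.univ.filter (fun u : Fˣ => u ^ D = 1)) := by
    apply Finset.filter_congr; intro u _; simpa using hiff u
  rw [hfe]
  apply le_antisymm
  · simpa using IsCyclic.card_pow_eq_one_le (α := Fˣ) hD0
  · -- the subgroup zpowers (g ^ (N / D)) sits inside the solution set
    set h := g ^ (N / D) with hh
    have hhD : h ^ D = 1 := by
      rw [hh, ← pow_mul, Nat.div_mul_cancel hDdvd, ← horder, pow_orderOf_eq_one]
    have hord : orderOf h = D := by
      rw [hh, orderOf_pow, horder, Nat.gcd_eq_right (Nat.div_dvd_of_dvd hDdvd),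
        Nat.div_div_self hDdvd hN0.ne']
    apply Finset.le_card_of_inj_on_range (fun k => h ^ k)
    · intro i _
      simp only [Finset.mem_filter, Finset.mem_univ, true_and]
      rw [← pow_mul, mul_comm, pow_mul, hhD, one_pow]
    · intro i hi j hj hij
      exact pow_injOn_Iio_orderOf (by rwa [Set.mem_Iio, hord]) (by rwa [Set.mem_Iio, hord]) hij

lemma aux_fiber (F : Type*) [Field F] [Fintype F] [DecidableEq F]
    (n : ℕ) (hn : 0 < n) (a : F) (ha : a ≠ 0) :
    {b : F | b ≠ 0 ∧ b ^ n = a ^ n}.ncard = Nat.gcd n (Fintype.card F - 1) := by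
  classical
  have h1 : {b : F | b ≠ 0 ∧ b ^ n = a ^ n} = (fun c => a * c) '' {c : F | c ^ n = 1} := by
    ext b
    constructor
    · rintro ⟨hb0, hbn⟩
      refine ⟨a⁻¹ * b, ?_, by field_simp⟩
      simp only [Set.mem_setOf_eq, mul_pow, hbn, inv_pow]
      field_simp
    · rintro ⟨c, hc, rfl⟩
      have hc0 : c ≠ 0 := by
        rintro rfl
        simp only [Set.mem_setOf_eq, zero_pow hn.ne'] at hc
        exact one_ne_zero hc.symm
      rw [Set.mem_setOf_eq] at hc
      exact ⟨mul_ne_zero ha hc0, by rw [mul_pow, hc, mul_one]⟩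
  have h2 : {c : F | c ^ n = 1} = Units.val '' {u : Fˣ | u ^ n = 1} := by
    ext c
    constructor
    · intro hc
      have hc0 : c ≠ 0 := by
        rintro rfl
        simp only [Set.mem_setOf_eq, zero_pow hn.ne'] at hc
        exact one_ne_zero hc.symm
      refine ⟨Units.mk0 c hc0, ?_, rfl⟩
      simp only [Set.mem_setOf_eq]
      ext
      push_cast
      exact hc
    · rintro ⟨u, hu, rfl⟩
      have := congrArg (Units.val) hu
      push_cast at this
      exact this
  rw [h1, Set.ncard_image_of_injective _ (mul_right_injective₀ ha), h2,
    Set.ncard_image_of_injective _ Units.val_injective]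
  have h3 : {u : Fˣ | u ^ n = 1}.ncard
      = (Finset.univ.filter (fun u : Fˣ => u ^ n = 1)).card := by
    rw [Set.ncard_eq_toFinset_card']
    congr 1
    ext u
    simp
  rw [h3, aux_units_count F n hn, Fintype.card_units]

theorem stmt_0 {F : Type*} [Field F] [Fintype F] (hchar : CharP F 2)
    (n : ℕ) (hn : 1 ≤ n) (m d : ℕ) (hm : m = Fintype.card F)
    (hd : d = Nat.gcd n (m - 1)) (G : SimpleGraph F)
    (hG : G = nTotalGraph ({0} : Set F) n) :
    (∀ x y : F, x ≠ 0 → y ≠ 0 → x ≠ y → (G.Adj x y ↔ x ^ n = y ^ n)) ∧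
    (∀ a : F, a ≠ 0 → {b : F | b ≠ 0 ∧ b ^ n = a ^ n}.ncard = d) ∧
    (∀ x : F, ¬ G.Adj 0 x) ∧
    ((fun x : F => x ^ n) '' {x : F | x ≠ 0}).ncard = (m - 1) / d := by
  classical
  haveI := hchar
  subst hG hm hd
  have hn0 : 0 < n := hn
  have haddzero : ∀ u v : F, u + v = 0 ↔ u = v := by
    intro u v
    rw [add_eq_zero_iff_eq_neg, CharTwo.neg_eq]
  refine ⟨?_, ?_, ?_, ?_⟩
  · intro x y hx hy hxy
    simp only [nTotalGraph, Set.mem_singleton_iff]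
    rw [haddzero]
    exact ⟨fun h => h.2, fun h => ⟨hxy, h⟩⟩
  · intro a ha
    exact aux_fiber F n hn0 a ha
  · rintro x ⟨hne, hmem⟩
    simp only [Set.mem_singleton_iff, zero_pow hn0.ne', zero_add] at hmem
    exact hne (pow_eq_zero_iff hn0.ne' |>.mp hmem).symm
  · set d := Nat.gcd n (Fintype.card F - 1) with hd
    have hd0 : 0 < d := Nat.gcd_pos_of_pos_left _ hn0
    set s : Finset F := Finset.univ.filter (· ≠ 0) with hs
    have hscard : s.card = Fintype.card F - 1 := by
      rw [hs]
      rw [Finset.filter_ne' Finset.univ 0, Finset.card_erase_of_mem (Finset.mem_univ 0),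
        Finset.card_univ]
    have hfib : ∀ b ∈ s.image (fun x : F => x ^ n),
        (s.filter (fun x => x ^ n = b)).card = d := by
      intro b hb
      obtain ⟨a, has, rfl⟩ := Finset.mem_image.mp hb
      rw [hs, Finset.mem_filter] at has
      have := aux_fiber F n hn0 a has.2
      rw [Set.ncard_eq_toFinset_card', ← hd] at this
      rw [← this]
      congr 1
      ext x
      simp [hs, Set.mem_toFinset, and_comm]
    have hcards : s.card = d * (s.image (fun x : F => x ^ n)).card := by
      apply le_antisymm
      · exact Finset.card_le_mul_card_image _ d (fun b hb => (hfib b hb).le)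
      · exact Finset.mul_card_image_le_card _ d (fun b hb => (hfib b hb).ge)
    have himg : ((fun x : F => x ^ n) '' {x : F | x ≠ 0}).ncard
        = (s.image (fun x : F => x ^ n)).card := by
      rw [Set.ncard_eq_toFinset_card']
      congr 1
      ext b
      simp [hs, Set.mem_toFinset]
    rw [himg, ← hscard, hcards, Nat.mul_div_cancel_left _ hd0]
end

section
/- Let F be a finite field with m elements and characteristic different from 2, let n ≥ 1 be an integer, d = gcd(n, m-1), and α = (m-1)/d. Then the subgraph of the n-total graph n-TG(F, {0}) induced on the nonzero elements F \ {0} has no edges (is totally disconnected) if and only if α is odd. -/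
theorem stmt_1 {F : Type*} [Field F] [Fintype F] (hchar : ringChar F ≠ 2)
    (n : ℕ) (hn : 1 ≤ n) (m d α : ℕ) (hm : m = Fintype.card F)
    (hd : d = Nat.gcd n (m - 1)) (hα : α = (m - 1) / d)
    (G : SimpleGraph F) (hG : G = nTotalGraph ({0} : Set F) n) :
    (∀ x y : F, x ≠ 0 → y ≠ 0 → ¬ G.Adj x y) ↔ Odd α := by
  subst hG hα hd
  haveI : DecidableEq F := Classical.decEq F
  set N : ℕ := m - 1 with hN
  have hm1 : N = Fintype.card Fˣ := by rw [hN, hm, Fintype.card_units]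
  set d : ℕ := Nat.gcd n N with hd
  have hdN : d ∣ N := Nat.gcd_dvd_right n N
  have hdn : d ∣ n := Nat.gcd_dvd_left n N
  have hno : orderOf (-1 : F) = 2 := by
    rw [orderOf_neg_one, if_neg hchar]
  have hne : (-1 : F) ≠ 1 := by
    intro h; rw [h, orderOf_one] at hno; omega
  have huo : orderOf (-1 : Fˣ) = 2 := by
    rw [← orderOf_units]; simpa using hno
  have huone : (-1 : Fˣ) ≠ 1 := by
    intro h
    apply hne
    have := congrArg (Units.val) h
    simpa using this
  have h2N : 2 ∣ N := by
    rw [← huo, hm1]; exact orderOf_dvd_card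
  have hNpos : 0 < N := by
    rw [hm1]; exact Fintype.card_pos
  have hdpos : 0 < d := Nat.gcd_pos_of_pos_left _ hn
  -- key group-theoretic equivalence
  have key : (∃ u : Fˣ, u ^ n = -1) ↔ 2 ∣ N / d := by
    constructor
    · rintro ⟨u, hu⟩
      have h1 : ((-1 : Fˣ)) ^ (N / d) = 1 := by
        rw [← hu, ← pow_mul]
        have : n * (N / d) = (n / d) * N := by
          calc n * (N / d) = (n / d * d) * (N / d) := by rw [Nat.div_mul_cancel hdn]
            _ = n / d * (d * (N / d)) := by ring
            _ = n / d * N := by rw [Nat.mul_div_cancel' hdN]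
        rw [this, pow_mul, hm1, pow_card_eq_one]
      have := orderOf_dvd_of_pow_eq_one h1
      rwa [huo] at this
    · rintro ⟨t, ht⟩
      obtain ⟨g, hg⟩ := IsCyclic.exists_generator (α := Fˣ)
      have hog : orderOf g = N := by
        rw [hm1, ← Nat.card_eq_fintype_card]
        exact orderOf_eq_card_of_forall_mem_zpowers hg
      -- g ^ (N / 2) = -1
      have hN2 : N / 2 * 2 = N := Nat.div_mul_cancel h2N
      have hhalf : g ^ (N / 2) = -1 := by
        have hsq : ((g : F) ^ (N / 2)) * ((g : F) ^ (N / 2)) = 1 := by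
          rw [← pow_add]
          have : N / 2 + N / 2 = N := by omega
          rw [this]
          have : (g ^ N : Fˣ) = 1 := by rw [← hog]; exact pow_orderOf_eq_one g
          calc (g : F) ^ N = ((g ^ N : Fˣ) : F) := by push_cast; ring
            _ = 1 := by rw [this]; rfl
        rcases mul_self_eq_one_iff.1 hsq with h | h
        · exfalso
          have : (g ^ (N / 2) : Fˣ) = 1 := Units.ext (by simpa using h)
          have hdvd := orderOf_dvd_of_pow_eq_one this
          rw [hog] at hdvd
          have hN2pos : 0 < N / 2 := by omega
          have := Nat.le_of_dvd hN2pos hdvd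
          omega
        · exact Units.ext (by simpa using h)
      -- Bezout
      have hbez := Nat.gcd_eq_gcd_ab n N
      set A : ℤ := Nat.gcdA n N with hA
      set B : ℤ := Nat.gcdB n N with hB
      refine ⟨g ^ ((t : ℤ) * A), ?_⟩
      have hgN : g ^ (N : ℤ) = 1 := by
        rw [zpow_natCast, ← hog]; exact pow_orderOf_eq_one g
      have hexp : (n : ℤ) * ((t : ℤ) * A) = (N / 2 : ℕ) - (N : ℤ) * ((t : ℤ) * B) := by
        have hNd : (N : ℤ) = d * (N / d : ℕ) := by
          exact_mod_cast (Nat.mul_div_cancel' hdN).symm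
        have hhalfd : ((N / 2 : ℕ) : ℤ) = d * t := by
          have : N / 2 = d * t := by
            have hNd' : N = d * (N / d) := (Nat.mul_div_cancel' hdN).symm
            rw [ht] at hNd'
            have hmul : N = 2 * (d * t) := by rw [hNd']; ring
            omega
          exact_mod_cast this
        rw [hhalfd]
        have : (d : ℤ) = n * A + N * B := hbez
        calc (n : ℤ) * ((t : ℤ) * A) = (n * A) * t := by ring
          _ = ((d : ℤ) - N * B) * t := by rw [this]; ring
          _ = (d : ℤ) * t - (N : ℤ) * ((t : ℤ) * B) := by ring
      calc (g ^ ((t : ℤ) * A)) ^ n = g ^ (((t : ℤ) * A) * n) := by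
            rw [← zpow_natCast, ← zpow_mul]
        _ = g ^ (((N / 2 : ℕ) : ℤ) - (N : ℤ) * ((t : ℤ) * B)) := by
            rw [← hexp]; ring_nf
        _ = g ^ ((N / 2 : ℕ) : ℤ) * (g ^ ((N : ℤ))) ^ (-((t : ℤ) * B)) := by
            rw [← zpow_mul, ← zpow_add]; ring_nf
        _ = -1 := by rw [hgN, one_zpow, mul_one, zpow_natCast, hhalf]
  -- main equivalence
  rw [← Nat.not_even_iff_odd, even_iff_two_dvd, ← key]
  constructor
  · intro h ⟨u, hu⟩
    have hx : (u : F) ≠ 0 := Units.ne_zero u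
    have hxy : (u : F) ≠ 1 := by
      intro h1
      apply huone
      have : u = 1 := Units.ext (by simpa using h1)
      rw [this, one_pow] at hu
      exact hu.symm
    apply h (u : F) 1 hx one_ne_zero
    refine ⟨hxy, ?_⟩
    have : ((u ^ n : Fˣ) : F) = -1 := by rw [hu]; rfl
    push_cast at this
    simp [this]
  · intro h x y hx hy ⟨hxy, hadd⟩
    apply h
    simp only [Set.mem_singleton_iff] at hadd
    refine ⟨Units.mk0 x hx / Units.mk0 y hy, ?_⟩
    apply Units.ext
    push_cast [Units.val_mk0]
    field_simp
    have hyy : y⁻¹ ^ n * y ^ n = 1 := by rw [← mul_pow, inv_mul_cancel₀ hy, one_pow]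
    linear_combination y⁻¹ ^ n * hadd - hyy
end

section
/- Let F be a finite field with m elements and characteristic different from 2, let n ≥ 1 be an integer, d = gcd(n, m-1), and α = (m-1)/d, and suppose α is even. In the subgraph of the n-total graph n-TG(F, {0}) induced on the nonzero elements: (i) two distinct nonzero vertices x, y are adjacent if and only if x^n = -y^n; (ii) for every nonzero x, the connected component of x is the set {y ∈ F : y ≠ 0 and (y^n = x^n or y^n = -x^n)}, which has exactly 2d elements; and (iii) this component is a complete bipartite graph K_{d,d} with parts {y ≠ 0 : y^n = x^n} and {y ≠ 0 : y^n = -x^n}, each of size d. Hence the induced subgraph on F \ {0} is a disjoint union of α/2 copies of K_{d,d}. -/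
open Polynomial

/-- Number of solutions of `y ^ n = c` in a finite field, when a solution `y₀ ≠ 0` exists. -/
lemma aux_card_pow_eq {F : Type*} [Field F] [Fintype F] {n d : ℕ} (hn : 0 < n)
    (hd : d = Nat.gcd n (Fintype.card F - 1)) {c : F} (y₀ : F) (hy₀ : y₀ ≠ 0) (hc : y₀ ^ n = c) :
    {y : F | y ^ n = c}.ncard = d := by
  classical
  have hNcard : Fintype.card Fˣ = Fintype.card F - 1 := Fintype.card_units F
  set N := Fintype.card F - 1 with hN
  have hdvdN : d ∣ N := hd ▸ Nat.gcd_dvd_right n N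
  have hNpos : 0 < N := by
    have : 2 ≤ Fintype.card F := Fintype.one_lt_card
    omega
  have hdpos : 0 < d := hd ▸ Nat.gcd_pos_of_pos_left N hn
  have hddvdn : d ∣ n := hd ▸ Nat.gcd_dvd_left n N
  -- primitive d-th root of unity
  obtain ⟨g, hg⟩ := IsCyclic.exists_generator (α := Fˣ)
  have horder : orderOf g = N := by
    rw [orderOf_eq_card_of_forall_mem_zpowers hg, Nat.card_eq_fintype_card, hNcard]
  have hζord : orderOf (g ^ (N / d)) = d := by
    rw [orderOf_pow, horder, Nat.gcd_eq_right (Nat.div_dvd_of_dvd hdvdN),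
      Nat.div_div_self hdvdN hNpos.ne']
  have hζ : IsPrimitiveRoot (((g ^ (N / d) : Fˣ) : F)) d := by
    rw [IsPrimitiveRoot.coe_units_iff]
    have := IsPrimitiveRoot.orderOf (g ^ (N / d))
    rwa [hζord] at this
  -- the set of n-th roots of unity equals the set of d-th roots of unity
  have hset : {ω : F | ω ^ n = 1} = ↑(nthRootsFinset d (1 : F)) := by
    ext ω
    simp only [Set.mem_setOf_eq, Finset.coe_sort_coe, Finset.mem_coe,
      mem_nthRootsFinset hdpos]
    constructor
    · intro hω
      have hω0 : ω ≠ 0 := fun h => by simp [h, zero_pow hn.ne'] at hω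
      have h1 : orderOf ω ∣ n := orderOf_dvd_of_pow_eq_one hω
      have h2 : orderOf ω ∣ N :=
        orderOf_dvd_of_pow_eq_one (FiniteField.pow_card_sub_one_eq_one ω hω0)
      exact orderOf_dvd_iff_pow_eq_one.mp (hd ▸ Nat.dvd_gcd h1 h2)
    · intro hω
      obtain ⟨k, hk⟩ := hddvdn
      rw [hk, pow_mul, hω, one_pow]
  have himg : {y : F | y ^ n = c} = (fun ω => y₀ * ω) '' {ω : F | ω ^ n = 1} := by
    ext y
    simp only [Set.mem_setOf_eq, Set.mem_image]
    constructor
    · intro hy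
      refine ⟨y / y₀, ?_, by field_simp⟩
      rw [div_pow, hy, ← hc, div_self (pow_ne_zero n hy₀)]
    · rintro ⟨ω, hω, rfl⟩
      rw [mul_pow, hω, hc, mul_one]
  rw [himg, Set.ncard_image_of_injective _ (mul_right_injective₀ hy₀), hset,
    Set.ncard_coe_finset, hζ.card_nthRootsFinset]

/-- Existence of an n-th root of `-1`. -/
lemma aux_exists_root_neg_one {F : Type*} [Field F] [Fintype F] (hchar : ringChar F ≠ 2)
    {n d α : ℕ} (hn : 1 ≤ n) (hd : d = Nat.gcd n (Fintype.card F - 1))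
    (hα : α = (Fintype.card F - 1) / d) (heven : Even α) :
    ∃ ε : F, ε ^ n = -1 := by
  classical
  have hNcard : Fintype.card Fˣ = Fintype.card F - 1 := Fintype.card_units F
  set N := Fintype.card F - 1 with hN
  have hdvdN : d ∣ N := hd ▸ Nat.gcd_dvd_right n N
  have hNpos : 0 < N := by
    have : 2 ≤ Fintype.card F := Fintype.one_lt_card
    omega
  have hdpos : 0 < d := hd ▸ Nat.gcd_pos_of_pos_left N hn
  have hNda : N = d * α := by rw [hα, Nat.mul_div_cancel' hdvdN]
  have hαpos : 0 < α := by
    rcases Nat.eq_zero_or_pos α with h | h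
    · rw [h, mul_zero] at hNda; omega
    · exact h
  obtain ⟨t, ht⟩ := heven
  have htpos : 0 < t := by omega
  obtain ⟨g, hg⟩ := IsCyclic.exists_generator (α := Fˣ)
  have horder : orderOf g = N := by
    rw [orderOf_eq_card_of_forall_mem_zpowers hg, Nat.card_eq_fintype_card, hNcard]
  have hgN : g ^ N = 1 := by rw [← horder]; exact pow_orderOf_eq_one g
  -- g ^ (d * t) = -1 as an element of F
  have hdt2 : d * t * 2 = N := by rw [hNda, ht]; ring
  have hx2 : (g ^ (d * t)) ^ 2 = 1 := by rw [← pow_mul, hdt2, hgN]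
  have hx1 : g ^ (d * t) ≠ 1 := by
    intro h
    have hdvd := orderOf_dvd_of_pow_eq_one h
    rw [horder] at hdvd
    have hlt : d * t < N := by nlinarith
    have hpos : 0 < d * t := Nat.mul_pos hdpos htpos
    exact absurd (Nat.le_of_dvd hpos hdvd) (not_le.mpr hlt)
  have hxneg : ((g ^ (d * t) : Fˣ) : F) = -1 := by
    set x : F := ((g ^ (d * t) : Fˣ) : F) with hxdef
    have h2 : x ^ 2 = 1 := by
      rw [hxdef, ← Units.val_pow_eq_pow_val, hx2, Units.val_one]
    have hfac : (x - 1) * (x + 1) = 0 := by linear_combination h2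
    rcases mul_eq_zero.mp hfac with h | h
    · exact absurd (Units.ext (show ((g ^ (d * t) : Fˣ) : F) = ((1 : Fˣ) : F) by
        rw [Units.val_one, ← sub_eq_zero]; exact h)) hx1
    · exact eq_neg_of_add_eq_zero_left h
  -- Bezout
  set a := Nat.gcdA n N with ha
  set b := Nat.gcdB n N with hb
  have hbez : (d : ℤ) = n * a + N * b := by rw [hd]; exact Nat.gcd_eq_gcd_ab n N
  refine ⟨((g ^ (a * t) : Fˣ) : F), ?_⟩
  have hgNz : g ^ (N : ℤ) = 1 := by rw [zpow_natCast, hgN]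
  have harith : (a * t) * n = (d : ℤ) * t - (N : ℤ) * (b * t) := by
    linear_combination (-(t:ℤ)) * hbez
  have key : (g ^ (a * t : ℤ)) ^ n = g ^ (d * t) :=
    calc (g ^ (a * t : ℤ)) ^ n = g ^ ((a * t) * n : ℤ) := by
          rw [← zpow_natCast (g ^ (a * t : ℤ)) n, ← zpow_mul]
      _ = g ^ ((d : ℤ) * t) * (g ^ ((N : ℤ) * (b * t)))⁻¹ := by rw [harith, zpow_sub]
      _ = g ^ ((d * t : ℕ) : ℤ) := by
          rw [zpow_mul g (N : ℤ) (b * t), hgNz, one_zpow, inv_one, mul_one]; norm_cast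
      _ = g ^ (d * t) := zpow_natCast g (d * t)
  rw [← Units.val_pow_eq_pow_val, key, hxneg]

theorem stmt_2 {F : Type*} [Field F] [Fintype F] (hchar : ringChar F ≠ 2)
    (n : ℕ) (hn : 1 ≤ n) (m d α : ℕ) (hm : m = Fintype.card F)
    (hd : d = Nat.gcd n (m - 1)) (hα : α = (m - 1) / d) (heven : Even α)
    (G : SimpleGraph F) (hG : G = nTotalGraph ({0} : Set F) n)
    (H : SimpleGraph {x : F | x ≠ 0}) (hH : H = G.induce {x : F | x ≠ 0}) :
    -- (i) adjacency criterion for distinct nonzero vertices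
    (∀ x y : F, x ≠ 0 → y ≠ 0 → x ≠ y → (G.Adj x y ↔ x ^ n = -y ^ n)) ∧
    -- (ii) the connected component of a nonzero vertex, and its size
    (∀ v : {x : F | x ≠ 0},
      {w : {x : F | x ≠ 0} | H.Reachable v w} =
        {w : {x : F | x ≠ 0} | (w : F) ^ n = (v : F) ^ n ∨ (w : F) ^ n = -(v : F) ^ n} ∧
      {w : {x : F | x ≠ 0} | H.Reachable v w}.ncard = 2 * d) ∧
    -- (iii) the component of `v` is complete bipartite with parts of size `d`
    (∀ v : {x : F | x ≠ 0},
      (∀ w₁ w₂ : {x : F | x ≠ 0}, (w₁ : F) ^ n = (v : F) ^ n → (w₂ : F) ^ n = (v : F) ^ n →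
        ¬ H.Adj w₁ w₂) ∧
      (∀ w₁ w₂ : {x : F | x ≠ 0}, (w₁ : F) ^ n = -(v : F) ^ n → (w₂ : F) ^ n = -(v : F) ^ n →
        ¬ H.Adj w₁ w₂) ∧
      (∀ w₁ w₂ : {x : F | x ≠ 0}, (w₁ : F) ^ n = (v : F) ^ n → (w₂ : F) ^ n = -(v : F) ^ n →
        H.Adj w₁ w₂) ∧
      {w : {x : F | x ≠ 0} | (w : F) ^ n = (v : F) ^ n}.ncard = d ∧
      {w : {x : F | x ≠ 0} | (w : F) ^ n = -(v : F) ^ n}.ncard = d) ∧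
    -- hence there are exactly `α / 2` connected components
    Nat.card H.ConnectedComponent = α / 2 := by
  classical
  subst hm hG hH
  -- basic numerology
  set N : ℕ := Fintype.card F - 1 with hN
  have hdvdN : d ∣ N := hd ▸ Nat.gcd_dvd_right n N
  have hNpos : 0 < N := by
    have : 2 ≤ Fintype.card F := Fintype.one_lt_card
    omega
  have hdpos : 0 < d := hd ▸ Nat.gcd_pos_of_pos_left N hn
  have hNda : N = d * α := by rw [hα, Nat.mul_div_cancel' hdvdN]
  -- algebraic helpers
  have two_ne : (2 : F) ≠ 0 := Ring.two_ne_zero hchar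
  have hself : ∀ x : F, x ≠ 0 → x ^ n ≠ -x ^ n := by
    intro x hx h
    have h2 : (2 : F) * x ^ n = 0 := by linear_combination h
    rcases mul_eq_zero.mp h2 with h' | h'
    · exact two_ne h'
    · exact pow_ne_zero n hx h'
  have hne : ∀ x y : F, x ≠ 0 → x ^ n = -y ^ n → x ≠ y := by
    intro x y hx h hxy
    exact hself x hx (hxy ▸ h)
  have hGAdj : ∀ x y : F, (nTotalGraph ({0} : Set F) n).Adj x y ↔ x ≠ y ∧ x ^ n = -y ^ n := by
    intro x y
    show (x ≠ y ∧ x ^ n + y ^ n ∈ ({0} : Set F)) ↔ _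
    constructor
    · rintro ⟨h1, h2⟩
      rw [Set.mem_singleton_iff, add_eq_zero_iff_eq_neg] at h2
      exact ⟨h1, h2⟩
    · rintro ⟨h1, h2⟩
      refine ⟨h1, ?_⟩
      rw [Set.mem_singleton_iff, h2]
      ring
  set V : Set F := {x : F | x ≠ 0} with hV
  set H : SimpleGraph V := (nTotalGraph ({0} : Set F) n).induce V with hH
  have hHAdj : ∀ w₁ w₂ : V, H.Adj w₁ w₂ ↔ (w₁ : F) ≠ (w₂ : F) ∧ (w₁ : F) ^ n = -(w₂ : F) ^ n := by
    intro w₁ w₂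
    rw [hH]
    exact hGAdj _ _
  have hH_of : ∀ w₁ w₂ : V, (w₁ : F) ^ n = -(w₂ : F) ^ n → H.Adj w₁ w₂ := by
    intro w₁ w₂ h
    exact (hHAdj w₁ w₂).mpr ⟨hne _ _ w₁.2 h, h⟩
  -- the n-th root of -1
  obtain ⟨ε, hε⟩ := aux_exists_root_neg_one hchar hn hd hα heven
  have hε0 : ε ≠ 0 := by
    intro h
    rw [h, zero_pow (by omega : n ≠ 0)] at hε
    exact neg_ne_zero.mpr one_ne_zero hε.symm
  -- part (i)
  have part1 : ∀ x y : F, x ≠ 0 → y ≠ 0 → x ≠ y →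
      ((nTotalGraph ({0} : Set F) n).Adj x y ↔ x ^ n = -y ^ n) := by
    intro x y _ _ hxy
    rw [hGAdj]
    exact and_iff_right hxy
  -- cardinalities of the two parts
  have hvpow_ne : ∀ v : V, (v : F) ^ n ≠ 0 := fun v => pow_ne_zero n v.2
  have cardA : ∀ (c : F), c ≠ 0 → (y₀ : F) → y₀ ≠ 0 → y₀ ^ n = c →
      {w : V | (w : F) ^ n = c}.ncard = d := by
    intro c hc y₀ hy₀ hy₀c
    have himg : Subtype.val '' {w : V | (w : F) ^ n = c} = {y : F | y ^ n = c} := by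
      ext y
      simp only [Set.mem_image, Set.mem_setOf_eq]
      constructor
      · rintro ⟨w, hw, rfl⟩; exact hw
      · intro hy
        have hy0 : y ≠ 0 := by
          intro h
          rw [h, zero_pow (by omega : n ≠ 0)] at hy
          exact hc hy.symm
        exact ⟨⟨y, hy0⟩, hy, rfl⟩
    calc {w : V | (w : F) ^ n = c}.ncard
        = (Subtype.val '' {w : V | (w : F) ^ n = c}).ncard :=
          (Set.ncard_image_of_injective _ Subtype.val_injective).symm
      _ = d := by rw [himg]; exact aux_card_pow_eq (by omega) hd y₀ hy₀ hy₀c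
  have hcard_pos : ∀ v : V, {w : V | (w : F) ^ n = (v : F) ^ n}.ncard = d := by
    intro v
    exact cardA _ (hvpow_ne v) (v : F) v.2 rfl
  have hcard_neg : ∀ v : V, {w : V | (w : F) ^ n = -(v : F) ^ n}.ncard = d := by
    intro v
    refine cardA _ (neg_ne_zero.mpr (hvpow_ne v)) (ε * (v : F)) (mul_ne_zero hε0 v.2) ?_
    rw [mul_pow, hε, neg_mul, one_mul]
  -- reachability characterization
  have hreach_mem : ∀ v u w : V, H.Walk u w →
      ((u : F) ^ n = (v : F) ^ n ∨ (u : F) ^ n = -(v : F) ^ n) →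
      ((w : F) ^ n = (v : F) ^ n ∨ (w : F) ^ n = -(v : F) ^ n) := by
    intro v u w p
    induction p with
    | nil => exact id
    | @cons a b c hab p ih =>
      intro ha
      apply ih
      have h := ((hHAdj a b).mp hab).2
      rcases ha with h' | h'
      · exact Or.inr (by linear_combination h - h')
      · exact Or.inl (by linear_combination h - h')
  have hmem_reach : ∀ v w : V,
      ((w : F) ^ n = (v : F) ^ n ∨ (w : F) ^ n = -(v : F) ^ n) → H.Reachable v w := by
    intro v w hw
    set u : V := ⟨ε * (v : F), mul_ne_zero hε0 v.2⟩ with hu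
    have hun : (u : F) ^ n = -(v : F) ^ n := by
      show (ε * (v : F)) ^ n = _
      rw [mul_pow, hε, neg_mul, one_mul]
    have hvu : H.Adj v u := hH_of v u (by rw [hun, neg_neg])
    rcases hw with h | h
    · have huw : H.Adj u w := hH_of u w (by rw [hun, h])
      exact hvu.toWalk.reachable.trans huw.toWalk.reachable
    · exact (hH_of v w (by rw [h, neg_neg])).toWalk.reachable
  have hcomp : ∀ v : V, {w : V | H.Reachable v w} =
      {w : V | (w : F) ^ n = (v : F) ^ n ∨ (w : F) ^ n = -(v : F) ^ n} := by
    intro v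
    ext w
    constructor
    · rintro ⟨p⟩
      exact hreach_mem v v w p (Or.inl rfl)
    · exact hmem_reach v w
  have hdisj : ∀ v : V, Disjoint {w : V | (w : F) ^ n = (v : F) ^ n}
      {w : V | (w : F) ^ n = -(v : F) ^ n} := by
    intro v
    rw [Set.disjoint_left]
    rintro w h1 h2
    have h1' : (w : F) ^ n = (v : F) ^ n := h1
    have h2' : (w : F) ^ n = -(v : F) ^ n := h2
    exact hself (v : F) v.2 (by linear_combination h2' - h1')
  have hcompcard : ∀ v : V, {w : V | H.Reachable v w}.ncard = 2 * d := by
    intro v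
    rw [hcomp v]
    have : {w : V | (w : F) ^ n = (v : F) ^ n ∨ (w : F) ^ n = -(v : F) ^ n} =
        {w : V | (w : F) ^ n = (v : F) ^ n} ∪ {w : V | (w : F) ^ n = -(v : F) ^ n} :=
      Set.setOf_or
    rw [this, Set.ncard_union_eq (hdisj v) (Set.toFinite _) (Set.toFinite _),
      hcard_pos v, hcard_neg v]
    ring
  refine ⟨part1, fun v => ⟨hcomp v, hcompcard v⟩, ?_, ?_⟩
  · -- part (iii)
    intro v
    refine ⟨?_, ?_, ?_, hcard_pos v, hcard_neg v⟩
    · intro w₁ w₂ h1 h2 hadj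
      have := ((hHAdj w₁ w₂).mp hadj).2
      rw [h1, h2] at this
      exact hself (v : F) v.2 this
    · intro w₁ w₂ h1 h2 hadj
      have := ((hHAdj w₁ w₂).mp hadj).2
      rw [h1, h2, neg_neg] at this
      exact hself (v : F) v.2 this.symm
    · intro w₁ w₂ h1 h2
      exact hH_of w₁ w₂ (by rw [h1, h2, neg_neg])
  · -- counting components
    haveI : Fintype V := Fintype.ofFinite _
    haveI : Fintype H.ConnectedComponent := Fintype.ofFinite _
    have hfiber : ∀ c : H.ConnectedComponent,
        (Finset.univ.filter fun w => H.connectedComponentMk w = c).card = 2 * d := by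
      refine SimpleGraph.ConnectedComponent.ind ?_
      intro v
      have hset : {w : V | H.Reachable v w} =
          ↑(Finset.univ.filter fun w => H.connectedComponentMk w = H.connectedComponentMk v) := by
        ext w
        simp only [Set.mem_setOf_eq, Finset.coe_filter, Finset.mem_univ, true_and,
          SimpleGraph.ConnectedComponent.eq]
        exact SimpleGraph.reachable_comm
      rw [← Set.ncard_coe_finset, ← hset, hcompcard v]
    have hsum : Fintype.card V =
        ∑ c : H.ConnectedComponent,
          (Finset.univ.filter fun w => H.connectedComponentMk w = c).card :=
      Finset.card_eq_sum_card_fiberwise (fun x _ => Finset.mem_univ _)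
    have htot : Fintype.card V = Fintype.card H.ConnectedComponent * (2 * d) := by
      rw [hsum]
      simp [hfiber]
    have hcardV : Fintype.card V = N := by
      have h1 : (Fintype.card V : ℕ) = Nat.card V := (Nat.card_eq_fintype_card).symm
      have h2 : Nat.card V = V.ncard := Nat.card_coe_set_eq V
      have h3 : V = ({0} : Set F)ᶜ := by ext x; simp [hV]
      have h4 : ({0} : Set F).ncard + (({0} : Set F)ᶜ).ncard = Nat.card F :=
        Set.ncard_add_ncard_compl _
      rw [Set.ncard_singleton] at h4
      rw [h1, h2, h3, hN, ← Nat.card_eq_fintype_card]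
      omega
    obtain ⟨t, ht⟩ := heven
    have hKt : Fintype.card H.ConnectedComponent = t := by
      have : (2 * d) * Fintype.card H.ConnectedComponent = (2 * d) * t := by
        rw [mul_comm, ← htot, hcardV, hNda, ht]; ring
      exact Nat.eq_of_mul_eq_mul_left (by omega) this
    rw [Nat.card_eq_fintype_card, hKt]
    omega
end

section
/- Let F be a finite field with m elements and characteristic different from 2, and let n ≥ 1 be an integer. Then the subgraph of the n-total graph n-TG(F, {0}) induced on the nonzero elements F \ {0} is connected if and only if gcd(n, m-1) = (m-1)/2. -/
lemma nTotalGraph_induce_adj {F : Type*} [CommRing F] (n : ℕ)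
    (a b : {x : F | x ≠ 0}) :
    ((nTotalGraph ({0} : Set F) n).induce {x : F | x ≠ 0}).Adj a b ↔
      (a : F) ≠ (b : F) ∧ (a : F) ^ n + (b : F) ^ n = 0 := by
  constructor
  · rintro ⟨h1, h2⟩
    exact ⟨h1, h2⟩
  · rintro ⟨h1, h2⟩
    exact ⟨h1, h2⟩

theorem stmt_3 {F : Type*} [Field F] [Fintype F] (hchar : ringChar F ≠ 2)
    (n : ℕ) (hn : 1 ≤ n) (m : ℕ) (hm : m = Fintype.card F)
    (G : SimpleGraph F) (hG : G = nTotalGraph ({0} : Set F) n) :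
    (G.induce {x : F | x ≠ 0}).Connected ↔ Nat.gcd n (m - 1) = (m - 1) / 2 := by
  subst hm hG
  set q := Fintype.card F with hq
  set N := q - 1 with hN
  set d := Nat.gcd n N with hd
  set G' := (nTotalGraph ({0} : Set F) n).induce {x : F | x ≠ 0} with hG'
  -- basic facts
  have h2 : (2 : F) ≠ 0 := Ring.two_ne_zero hchar
  have hneg : (-1 : F) ≠ 1 := by
    intro h; apply h2; linear_combination -h
  have hqmod : q % 2 = 1 := FiniteField.odd_card_of_char_ne_two hchar
  have hq2 : 1 < q := Fintype.one_lt_card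
  have hq3 : 3 ≤ q := by omega
  have hN2 : 2 ≤ N := by omega
  have hNeven : N % 2 = 0 := by omega
  have hNx : ∀ x : F, x ≠ 0 → x ^ N = 1 := fun x hx =>
    FiniteField.pow_card_sub_one_eq_one x hx
  have sqh : ∀ a : F, a ^ 2 = 1 → a = 1 ∨ a = -1 := by
    intro a h
    have h' : (a - 1) * (a + 1) = 0 := by linear_combination h
    rcases mul_eq_zero.mp h' with h1 | h1
    · exact Or.inl (by linear_combination h1)
    · exact Or.inr (by linear_combination h1)
  -- an edge produces z with z^n = -1
  have hz : ∀ x y : F, x ≠ 0 → y ≠ 0 → x ^ n + y ^ n = 0 → (x * y⁻¹) ^ n = -1 := by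
    intro x y hx hy h
    have hyn : y ^ n ≠ 0 := pow_ne_zero _ hy
    rw [mul_pow, inv_pow]
    field_simp
    linear_combination h
  -- Lemma A : any edge forces d ∣ N / 2
  have edgeA : ∀ x y : F, x ≠ 0 → y ≠ 0 → x ^ n + y ^ n = 0 → d ∣ N / 2 := by
    intro x y hx hy h
    have hz1 := hz x y hx hy h
    have hz0 : x * y⁻¹ ≠ 0 := mul_ne_zero hx (inv_ne_zero hy)
    have hzN : (x * y⁻¹) ^ N = 1 := hNx _ hz0
    obtain ⟨a, ha⟩ : d ∣ n := Nat.gcd_dvd_left _ _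
    obtain ⟨c, hc⟩ : d ∣ N := Nat.gcd_dvd_right _ _
    have hcalc : (-1 : F) ^ c = 1 := by
      rw [← hz1, ← pow_mul]
      have hnc : n * c = N * a := by
        calc n * c = (d * a) * c := by rw [ha]
          _ = (d * c) * a := by ring
          _ = N * a := by rw [hc]
      rw [hnc, pow_mul, hzN, one_pow]
    have hceven : Even c := (neg_one_pow_eq_one_iff_even hneg).mp hcalc
    obtain ⟨s, hs⟩ := hceven
    refine ⟨s, ?_⟩
    have hNds : N = 2 * (d * s) := by rw [hc, hs]; ring
    omega
  -- Lemma B : pow (2*d) is constant along edges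
  have edgeB : ∀ x y : F, x ≠ 0 → y ≠ 0 → x ^ n + y ^ n = 0 →
      x ^ (2 * d) = y ^ (2 * d) := by
    intro x y hx hy h
    have hz1 := hz x y hx hy h
    have hz0 : x * y⁻¹ ≠ 0 := mul_ne_zero hx (inv_ne_zero hy)
    have hzN : (x * y⁻¹) ^ N = 1 := hNx _ hz0
    have hz2n : (x * y⁻¹) ^ (2 * n) = 1 := by
      rw [mul_comm 2 n, pow_mul, hz1, neg_one_sq]
    have hord : orderOf (x * y⁻¹) ∣ Nat.gcd (2 * n) N :=
      Nat.dvd_gcd (orderOf_dvd_of_pow_eq_one hz2n) (orderOf_dvd_of_pow_eq_one hzN)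
    have hgd : Nat.gcd (2 * n) N ∣ 2 * d := by
      have h1 : Nat.gcd (2 * n) N ∣ Nat.gcd (2 * n) (2 * N) :=
        Nat.dvd_gcd (Nat.gcd_dvd_left _ _)
          ((Nat.gcd_dvd_right _ _).trans ⟨2, by ring⟩)
      rwa [Nat.gcd_mul_left] at h1
    have hz2d : (x * y⁻¹) ^ (2 * d) = 1 :=
      orderOf_dvd_iff_pow_eq_one.mp (hord.trans hgd)
    have hxy : x = x * y⁻¹ * y := by field_simp
    rw [hxy, mul_pow, hz2d, one_mul]
  -- the generator of the unit group
  obtain ⟨u, hu⟩ := IsCyclic.exists_generator (α := Fˣ)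
  have hordu : orderOf u = N := by
    rw [orderOf_eq_card_of_forall_mem_zpowers hu, Nat.card_units,
      Nat.card_eq_fintype_card]
  have hu0 : (u : F) ≠ 0 := u.ne_zero
  constructor
  · -- connected → gcd = N/2
    intro hconn
    have hu1 : (u : F) ≠ 1 := by
      intro h
      have : u = 1 := Units.ext h
      rw [this, orderOf_one] at hordu
      omega
    have hmem1 : (1 : F) ∈ {x : F | x ≠ 0} := one_ne_zero
    have hmemu : (u : F) ∈ {x : F | x ≠ 0} := hu0
    have hR := hconn.preconnected ⟨1, hmem1⟩ ⟨(u : F), hmemu⟩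
    obtain ⟨w⟩ := hR
    -- invariant along walks
    have hinv : ∀ (a b : {x : F | x ≠ 0}) (_ : G'.Walk a b),
        (a : F) ^ (2 * d) = (b : F) ^ (2 * d) := by
      intro a b w
      induction w with
      | nil => rfl
      | @cons a c b h p ih =>
        have h' := (nTotalGraph_induce_adj n a c).mp h
        exact (edgeB _ _ a.2 c.2 h'.2).trans ih
    -- a walk between distinct vertices contains at least one edge
    have hedge0 : ∀ (a b : {x : F | x ≠ 0}) (_ : G'.Walk a b), a ≠ b → d ∣ N / 2 := by
      intro a b w hab
      cases w with
      | nil => exact absurd rfl hab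
      | @cons _ c _ h p =>
        have h' := (nTotalGraph_induce_adj n _ c).mp h
        exact edgeA _ _ a.2 c.2 h'.2
    have hedge : d ∣ N / 2 :=
      hedge0 _ _ w (fun h => hu1 (congrArg Subtype.val h).symm)
    have h1u : (1 : F) ^ (2 * d) = (u : F) ^ (2 * d) := hinv _ _ w
    have hu2d : (u : F) ^ (2 * d) = 1 := by rw [← h1u, one_pow]
    have hu2d' : u ^ (2 * d) = 1 := by
      ext
      rw [Units.val_pow_eq_pow_val, hu2d, Units.val_one]
    have hN2d : N ∣ 2 * d := by
      have := orderOf_dvd_of_pow_eq_one hu2d'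
      rwa [hordu] at this
    obtain ⟨s, hs⟩ := hedge
    have hNds : N = 2 * (d * s) := by omega
    have h2dN : 2 * d ∣ N := ⟨s, by rw [hNds]; ring⟩
    have := Nat.dvd_antisymm hN2d h2dN
    omega
  · -- gcd = N/2 → connected
    intro hgcd
    have hN2pos : 0 < N / 2 := by omega
    obtain ⟨k, hk⟩ : N / 2 ∣ n := hgcd ▸ Nat.gcd_dvd_left n N
    have hkodd : Odd k := by
      have hNsplit : N = N / 2 * 2 := by omega
      have : Nat.gcd (N / 2 * k) (N / 2 * 2) = N / 2 * Nat.gcd k 2 :=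
        Nat.gcd_mul_left _ _ _
      rw [← hk, ← hNsplit] at this
      rw [hd] at hgcd
      have hk2 : Nat.gcd k 2 = 1 := by
        refine Nat.eq_of_mul_eq_mul_left hN2pos ?_
        rw [mul_one, ← this]
        exact hgcd
      have : ¬ (2 ∣ k) := by
        intro h2k
        have : (2 : ℕ) ∣ Nat.gcd k 2 := Nat.dvd_gcd h2k dvd_rfl
        omega
      exact Nat.odd_iff.mpr (by omega)
    -- u^(N/2) = -1
    have huhalf : (u : F) ^ (N / 2) = -1 := by
      have hsq : ((u : F) ^ (N / 2)) ^ 2 = 1 := by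
        rw [← pow_mul]
        have : N / 2 * 2 = N := by omega
        rw [this]
        exact hNx _ hu0
      rcases sqh _ hsq with h1 | h1
      · exfalso
        have hunit : u ^ (N / 2) = 1 := by
          ext
          rw [Units.val_pow_eq_pow_val, h1, Units.val_one]
        have hdvd : orderOf u ∣ N / 2 := orderOf_dvd_of_pow_eq_one hunit
        rw [hordu] at hdvd
        have := Nat.le_of_dvd hN2pos hdvd
        omega
      · exact h1
    have hun : (u : F) ^ n = -1 := by
      rw [hk, pow_mul, huhalf, hkodd.neg_one_pow]
    -- every nonzero x has x^n = ±1
    have hkey : ∀ x : F, x ≠ 0 → x ^ n = 1 ∨ x ^ n = -1 := by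
      intro x hx
      apply sqh
      rw [← pow_mul]
      have h2n : n * 2 = N * k := by
        have hNsplit : N / 2 * 2 = N := by omega
        calc n * 2 = N / 2 * k * 2 := by rw [hk]
          _ = N / 2 * 2 * k := by ring
          _ = N * k := by rw [hNsplit]
      rw [h2n, pow_mul, hNx x hx, one_pow]
    -- adjacency criterion
    have hadj : ∀ a b : {x : F | x ≠ 0}, (a : F) ^ n + (b : F) ^ n = 0 →
        G'.Adj a b := by
      intro a b hsum
      refine (nTotalGraph_induce_adj n a b).mpr ⟨?_, hsum⟩
      intro he
      rw [he] at hsum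
      have h2b : (2 : F) * (b : F) ^ n = 0 := by linear_combination hsum
      rcases mul_eq_zero.mp h2b with h' | h'
      · exact h2 h'
      · exact pow_ne_zero n b.2 h'
    haveI : Nonempty {x : F | x ≠ 0} := ⟨⟨1, one_ne_zero⟩⟩
    constructor
    · -- preconnected
      have hmem1 : (1 : F) ∈ {x : F | x ≠ 0} := one_ne_zero
      have hmemu : (u : F) ∈ {x : F | x ≠ 0} := hu0
      have hreach1 : ∀ a : {x : F | x ≠ 0}, G'.Reachable a ⟨1, hmem1⟩ := by
        intro a
        rcases hkey a a.2 with h1 | h1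
        · by_cases hae : a = ⟨1, hmem1⟩
          · rw [hae]
          · refine ((hadj a ⟨(u : F), hmemu⟩ ?_).reachable).trans
              ((hadj ⟨(u : F), hmemu⟩ ⟨1, hmem1⟩ ?_).reachable)
            · rw [h1, hun]; ring
            · rw [hun]; simp
        · exact (hadj a ⟨1, hmem1⟩ (by rw [h1]; simp)).reachable
      intro a b
      exact (hreach1 a).trans (hreach1 b).symm
end

section
/- Let F be a finite field and n ≥ 1 an integer, and let G be the subgraph of the n-total graph n-TG(F, {0}) induced on the nonzero elements F \ {0}. Then (1) the diameter of G is 0, 1, 2, or ∞; and (2) the girth of G is 3, 4, or ∞. -/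
open SimpleGraph Walk in
lemma tri_isCycle' {V : Type*} {G : SimpleGraph V} {a b c : V}
    (hab : G.Adj a b) (hbc : G.Adj b c) (hca : G.Adj c a) (hac : a ≠ c) :
    (Walk.cons hab (Walk.cons hbc (Walk.cons hca Walk.nil))).IsCycle := by
  simp_all [Walk.isCycle_def, Walk.isTrail_def, Sym2.eq_iff, G.ne_of_adj hab, G.ne_of_adj hbc]
  aesop

open SimpleGraph Walk in
lemma quad_isCycle' {V : Type*} {G : SimpleGraph V} {a b c d : V}
    (hab : G.Adj a b) (hbc : G.Adj b c) (hcd : G.Adj c d) (hda : G.Adj d a)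
    (hac : a ≠ c) (hbd : b ≠ d) :
    (Walk.cons hab (Walk.cons hbc (Walk.cons hcd (Walk.cons hda Walk.nil)))).IsCycle := by
  simp_all [Walk.isCycle_def, Walk.isTrail_def, Sym2.eq_iff]
  aesop

open SimpleGraph in
lemma egirth_le_len {V : Type*} {G : SimpleGraph V} {a : V} {w : G.Walk a a}
    (hw : w.IsCycle) : G.egirth ≤ w.length :=
  iInf_le_of_le a <| iInf_le_of_le w <| iInf_le _ hw

lemma enat_le_two {d : ℕ∞} (h : d ≤ 2) : d = 0 ∨ d = 1 ∨ d = 2 := by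
  lift d to ℕ using ne_top_of_le_ne_top (by decide) h
  have : d ≤ 2 := by exact_mod_cast h
  interval_cases d <;> simp

lemma enat_le_four {d : ℕ∞} (h3 : 3 ≤ d) (h : d ≤ 4) : d = 3 ∨ d = 4 := by
  lift d to ℕ using ne_top_of_le_ne_top (by decide) h
  have h' : d ≤ 4 := by exact_mod_cast h
  have h3' : 3 ≤ d := by exact_mod_cast h3
  interval_cases d <;> simp

theorem stmt_4 {F : Type*} [Field F] [Fintype F] (n : ℕ) (hn : 1 ≤ n)
    (G : SimpleGraph {x : F | x ≠ 0})
    (hG : G = (nTotalGraph ({0} : Set F) n).induce {x : F | x ≠ 0}) :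
    (G.ediam = 0 ∨ G.ediam = 1 ∨ G.ediam = 2 ∨ G.ediam = ⊤) ∧
    (G.egirth = 3 ∨ G.egirth = 4 ∨ G.egirth = ⊤) := by
  have hadj : ∀ u v : {x : F | x ≠ 0},
      G.Adj u v ↔ (u : F) ≠ (v : F) ∧ (u : F) ^ n + (v : F) ^ n = 0 := by
    subst hG; intro u v
    simp [nTotalGraph, SimpleGraph.induce, SimpleGraph.comap]
  -- parity along walks
  have parity : ∀ (u v : {x : F | x ≠ 0}) (w : G.Walk u v),
      (u : F) ^ n = (v : F) ^ n ∨ (u : F) ^ n = -(v : F) ^ n := by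
    intro u v w
    induction w with
    | nil => exact Or.inl rfl
    | cons h p ih =>
      obtain ⟨-, hsum⟩ := (hadj _ _).mp h
      have h1 : (_ : F) ^ n = -(_ : F) ^ n := eq_neg_of_add_eq_zero_left hsum
      rcases ih with h2 | h2
      · right; rw [h1, h2]
      · left; rw [h1, h2, neg_neg]
  constructor
  · -- diameter
    have key : ∀ u v : {x : F | x ≠ 0}, G.edist u v ≤ 2 ∨ G.edist u v = ⊤ := by
      intro u v
      by_cases hr : G.Reachable u v
      · left
        obtain ⟨w⟩ := hr
        by_cases huv : u = v
        · subst huv; simp [SimpleGraph.edist_self]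
        by_cases hA : G.Adj u v
        · calc G.edist u v ≤ _ := SimpleGraph.edist_le hA.toWalk
            _ ≤ 2 := by simp
        -- nonadjacent: u^n = v^n
        have hne : (u : F) ≠ (v : F) := fun h => huv (Subtype.ext h)
        have hpow : (u : F) ^ n = (v : F) ^ n := by
          rcases parity u v w with h | h
          · exact h
          · exact absurd ((hadj u v).mpr ⟨hne, by rw [h]; ring⟩) hA
        have hns : (u : F) ^ n + (v : F) ^ n ≠ 0 :=
          fun h => hA ((hadj u v).mpr ⟨hne, h⟩)
        -- extract an edge from the walk
        obtain ⟨x, y, hxy⟩ : ∃ x y : {x : F | x ≠ 0}, G.Adj x y := by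
          cases w with
          | nil => exact absurd rfl huv
          | cons h p => exact ⟨_, _, h⟩
        obtain ⟨-, hxys⟩ := (hadj _ _).mp hxy
        have hy : (y : F) ≠ 0 := y.2
        set c : F := (x : F) * (y : F)⁻¹ with hc
        have hcn : c ^ n = -1 := by
          rw [hc, mul_pow, eq_neg_of_add_eq_zero_left hxys, inv_pow,
            neg_mul, mul_inv_cancel₀ (pow_ne_zero n hy)]
        have hc0 : c ≠ 0 := by
          intro h; rw [h, zero_pow (by omega)] at hcn; simp at hcn
        have hz0 : c * (u : F) ≠ 0 := mul_ne_zero hc0 u.2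
        set z : {x : F | x ≠ 0} := ⟨c * (u : F), hz0⟩ with hzdef
        have hzn : (z : F) ^ n = -(u : F) ^ n := by
          show (c * (u : F)) ^ n = _
          rw [mul_pow, hcn]; ring
        have h1 : G.Adj u z := by
          refine (hadj u z).mpr ⟨?_, by rw [hzn]; ring⟩
          intro h
          apply hns
          have h5 : (u : F) ^ n = -(u : F) ^ n := by
            calc (u : F) ^ n = (z : F) ^ n := by rw [h]
              _ = -(u : F) ^ n := hzn
          rw [← hpow]
          linear_combination h5
        have h2 : G.Adj z v := by
          refine (hadj z v).mpr ⟨?_, by rw [hzn, hpow]; ring⟩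
          intro h
          apply hns
          have h5 : (v : F) ^ n = -(u : F) ^ n := by rw [← h]; exact hzn
          linear_combination h5
        calc G.edist u v ≤ (SimpleGraph.Walk.cons h1 (SimpleGraph.Walk.cons h2 SimpleGraph.Walk.nil)).length :=
              SimpleGraph.edist_le _
          _ ≤ 2 := by simp
      · right; exact SimpleGraph.edist_eq_top_of_not_reachable hr
    by_cases htop : ∃ u v : {x : F | x ≠ 0}, G.edist u v = ⊤
    · obtain ⟨u, v, h⟩ := htop
      right; right; right
      exact top_le_iff.mp (h ▸ SimpleGraph.edist_le_ediam)
    · push_neg at htop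
      have : G.ediam ≤ 2 := SimpleGraph.ediam_le_of_edist_le fun u v =>
        (key u v).resolve_right (htop u v)
      rcases enat_le_two this with h | h | h
      · exact Or.inl h
      · exact Or.inr (Or.inl h)
      · exact Or.inr (Or.inr (Or.inl h))
  · -- girth
    by_cases hac : G.IsAcyclic
    · exact Or.inr (Or.inr (SimpleGraph.egirth_eq_top.mpr hac))
    obtain ⟨a, w, hw, -⟩ := SimpleGraph.exists_egirth_eq_length.mpr hac
    have hlen3 := hw.three_le_length
    have hle4 : G.egirth ≤ 4 := by
      match w, hw, hlen3 with
      | .nil, hw, hlen3 => simp at hlen3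
      | .cons h .nil, hw, hlen3 => simp at hlen3
      | .cons _ (.cons _ .nil), hw, hlen3 => simp at hlen3
      | .cons (v := b) h1 (.cons (v := c) h2 (.cons (v := d) h3 q)), hw, hlen3 =>
        -- support tail nodup
        have hnd := hw.2
        simp only [SimpleGraph.Walk.support_cons, List.tail_cons, List.nodup_cons] at hnd
        obtain ⟨hb, hc, hq⟩ := hnd
        have hbc : b ≠ c := fun h => hb (h ▸ List.mem_cons_self)
        have hca : c ≠ a := fun h => hc (h ▸ SimpleGraph.Walk.end_mem_support q)
        by_cases hda : d = a
        · subst hda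
          have tc := tri_isCycle' h1 h2 h3 (Ne.symm hca)
          calc G.egirth ≤ _ := egirth_le_len tc
            _ ≤ 4 := by norm_num [SimpleGraph.Walk.length_cons, SimpleGraph.Walk.length_nil]
        · have hbd : b ≠ d := fun h => hb (List.mem_cons_of_mem _ (h ▸ SimpleGraph.Walk.start_mem_support q))
          have hcd' : c ≠ d := G.ne_of_adj h3
          -- a ~ d
          have p1 := eq_neg_of_add_eq_zero_left ((hadj _ _).mp h1).2
          have p2 := eq_neg_of_add_eq_zero_left ((hadj _ _).mp h2).2
          have p3 := eq_neg_of_add_eq_zero_left ((hadj _ _).mp h3).2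
          have h4 : G.Adj d a := by
            refine (hadj d a).mpr ⟨fun h => hda (Subtype.ext h), ?_⟩
            rw [p1, p2, p3]; ring
          have qc := quad_isCycle' h1 h2 h3 h4 (Ne.symm hca) hbd
          calc G.egirth ≤ _ := egirth_le_len qc
            _ ≤ 4 := by norm_num [SimpleGraph.Walk.length_cons, SimpleGraph.Walk.length_nil]
    rcases enat_le_four SimpleGraph.three_le_egirth hle4 with h | h
    · exact Or.inl h
    · exact Or.inr (Or.inl h)
end

section
/- Let k ≥ 2 and let R = R_1 × ⋯ × R_k be a product of integral domains (i.e., R = Π_{i ∈ Fin k} R_i with each R_i an integral domain). Let P be a prime ideal of R_1 and let D = {x ∈ R : x_1 ∈ P} (that is, D = P × R_2 × ⋯ × R_k). Then for every integer n ≥ 1, the n-total graph n-TG(R, D) is not connected. -/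
theorem stmt_5 (k : ℕ) (hk : 2 ≤ k) (R : Fin k → Type*)
    [∀ i, CommRing (R i)] [∀ i, IsDomain (R i)]
    (i₀ : Fin k) (hi₀ : (i₀ : ℕ) = 0)
    (P : Ideal (R i₀)) (hP : P.IsPrime)
    (D : Set (∀ i, R i)) (hD : D = {x : ∀ i, R i | x i₀ ∈ P})
    (n : ℕ) (hn : 1 ≤ n) :
    ¬ (nTotalGraph D n).Connected := by
  intro hconn
  -- the invariant: reachable from a vertex in A stays in A
  have key : ∀ x y : (∀ i, R i), (nTotalGraph D n).Reachable x y →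
      x i₀ ∈ P → y i₀ ∈ P := by
    intro x y hxy
    obtain ⟨w⟩ := hxy
    induction w with
    | nil => exact fun h => h
    | @cons u v w h p ih =>
      intro hx
      apply ih
      obtain ⟨_, hd⟩ := h
      rw [hD] at hd
      have hd' : _ ∈ P := hd
      simp only [Pi.add_apply, Pi.pow_apply] at hd'
      have hxn : (u i₀) ^ n ∈ P := by
        have := P.pow_mem_of_mem hx n (by omega)
        exact this
      have : (_ : R i₀) ^ n ∈ P := (P.add_mem_iff_right hxn).mp hd'
      exact hP.mem_of_pow_mem n this
  have h01 := key 0 1 (hconn.preconnected 0 1)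
  simp only [Pi.zero_apply, Pi.one_apply] at h01
  exact (Ideal.ne_top_iff_one P).mp hP.ne_top (h01 P.zero_mem)
end

section
/- Let R be an integral domain, k ≥ 2, and let P_1, …, P_k be prime ideals of R that are pairwise incomparable (for all i ≠ j, P_i ⊄ P_j and P_j ⊄ P_i). Let D = P_1 ∪ P_2 ∪ ⋯ ∪ P_k and let n ≥ 1 be an integer. Then the n-total graph n-TG(R, D) is connected if and only if there exists a path in n-TG(R, D) between the vertices 0 and 1 (i.e., 0 and 1 are reachable from each other). -/
theorem stmt_6 {R : Type*} [CommRing R] [IsDomain R]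
    (k : ℕ) (hk : 2 ≤ k) (P : Fin k → Ideal R) (hprime : ∀ i, (P i).IsPrime)
    (hincomp : ∀ i j, i ≠ j → ¬ P i ≤ P j)
    (D : Set R) (hD : D = ⋃ i, (P i : Set R))
    (n : ℕ) (hn : 1 ≤ n) :
    (nTotalGraph D n).Connected ↔ (nTotalGraph D n).Reachable 0 1 := by
  subst hD
  constructor
  · intro h
    exact h.preconnected 0 1
  · intro h
    have key : ∀ x : R, (nTotalGraph (⋃ i, (P i : Set R)) n).Reachable 0 x := by
      intro x
      rcases eq_or_ne x 0 with rfl | hx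
      · rfl
      · let hom : nTotalGraph (⋃ i, (P i : Set R)) n →g
            nTotalGraph (⋃ i, (P i : Set R)) n :=
          { toFun := fun r => x * r
            map_rel' := by
              rintro a b ⟨hab, hd⟩
              refine ⟨fun hc => hab (mul_left_cancel₀ hx hc), ?_⟩
              rcases Set.mem_iUnion.1 hd with ⟨i, hi⟩
              refine Set.mem_iUnion.2 ⟨i, ?_⟩
              have heq : (x * a) ^ n + (x * b) ^ n = x ^ n * (a ^ n + b ^ n) := by ring
              rw [heq]
              exact Ideal.mul_mem_left _ _ hi }
        have h2 := h.map hom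
        have e0 : hom 0 = 0 := mul_zero x
        have e1 : hom 1 = x := mul_one x
        rwa [e0, e1] at h2
    exact ⟨fun a b => (key a).symm.trans (key b)⟩
end

section
/- Let R be an integral domain, k ≥ 2, and let P_1, …, P_k be prime ideals of R that are pairwise incomparable (for all i ≠ j, P_i ⊄ P_j and P_j ⊄ P_i). Let D = P_1 ∪ ⋯ ∪ P_k, and let n ≥ 1 be an odd integer. If at least two of the ideals are coprime (there exist i ≠ j with P_i + P_j = R), then the n-total graph n-TG(R, D) is connected and its diameter equals 2. -/
theorem stmt_7 {R : Type*} [CommRing R] [IsDomain R]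
    (k : ℕ) (hk : 2 ≤ k) (P : Fin k → Ideal R) (hprime : ∀ i, (P i).IsPrime)
    (hincomp : ∀ i j, i ≠ j → ¬ P i ≤ P j)
    (D : Set R) (hD : D = ⋃ i, (P i : Set R))
    (n : ℕ) (hn : 1 ≤ n) (hodd : Odd n)
    (hcoprime : ∃ i j, i ≠ j ∧ P i ⊔ P j = ⊤) :
    (nTotalGraph D n).Connected ∧ (nTotalGraph D n).ediam = 2 := by
  classical
  obtain ⟨i, j, hij, hsum⟩ := hcoprime
  set G := nTotalGraph D n with hG
  -- adjacency from sum membership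
  have adjlem : ∀ (m : Fin k) (a b : R), a ≠ b → a + b ∈ P m → G.Adj a b := by
    intro m a b hab h
    refine ⟨hab, ?_⟩
    rw [hD]
    exact Set.mem_iUnion.2 ⟨m, (P m).mem_of_dvd (Odd.add_dvd_pow_add_pow a b hodd) h⟩
  -- nonzero ideals
  have hibot : P i ≠ ⊥ := fun h => hincomp i j hij (h ▸ bot_le)
  have hjbot : P j ≠ ⊥ := fun h => hincomp j i hij.symm (h ▸ bot_le)
  obtain ⟨s, hsi, hs0⟩ := Submodule.ne_bot_iff (P i) |>.1 hibot
  obtain ⟨s', hsj, hs'0⟩ := Submodule.ne_bot_iff (P j) |>.1 hjbot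
  set t0 : R := s * s' with ht0
  have hti0 : t0 ∈ P i := Ideal.mul_mem_right _ _ hsi
  have htj0 : t0 ∈ P j := Ideal.mul_mem_left _ _ hsj
  have ht0ne : t0 ≠ 0 := mul_ne_zero hs0 hs'0
  have ht0ne1 : t0 ≠ 1 := by
    intro h
    exact (hprime i).ne_top (Ideal.eq_top_iff_one _ |>.2 (h ▸ hti0))
  -- common neighbor
  have common : ∀ x y : R, x ≠ y → ∃ w, G.Adj x w ∧ G.Adj w y := by
    intro x y hxy
    have h1 : (1 : R) ∈ P i ⊔ P j := by rw [hsum]; trivial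
    obtain ⟨a, ha, b, hb, hab1⟩ := Submodule.mem_sup.1 h1
    set w0 : R := -(x * b + y * a) with hw0
    have hw0x : x + w0 = (x - y) * a := by rw [hw0]; linear_combination (-x) * hab1
    have hw0y : y + w0 = (y - x) * b := by rw [hw0]; linear_combination (-y) * hab1
    obtain ⟨t, htmem, htx, hty⟩ :
        ∃ t : R, (t ∈ P i ∧ t ∈ P j) ∧ w0 + t ≠ x ∧ w0 + t ≠ y := by
      by_cases hx0 : w0 = x
      · by_cases hy1 : w0 + t0 = y
        · refine ⟨t0 * t0, ⟨Ideal.mul_mem_left _ _ hti0, Ideal.mul_mem_left _ _ htj0⟩, ?_, ?_⟩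
          · intro h
            exact ht0ne (mul_self_eq_zero.1 (by linear_combination h - hx0))
          · intro h
            have : t0 * (t0 - 1) = 0 := by linear_combination h - hy1
            rcases mul_eq_zero.1 this with h' | h'
            · exact ht0ne h'
            · exact ht0ne1 (by linear_combination h')
        · refine ⟨t0, ⟨hti0, htj0⟩, ?_, hy1⟩
          intro h
          exact ht0ne (by linear_combination h - hx0)
      · by_cases hy0 : w0 = y
        · by_cases hx1 : w0 + t0 = x
          · refine ⟨t0 * t0, ⟨Ideal.mul_mem_left _ _ hti0, Ideal.mul_mem_left _ _ htj0⟩, ?_, ?_⟩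
            · intro h
              have : t0 * (t0 - 1) = 0 := by linear_combination h - hx1
              rcases mul_eq_zero.1 this with h' | h'
              · exact ht0ne h'
              · exact ht0ne1 (by linear_combination h')
            · intro h
              exact ht0ne (mul_self_eq_zero.1 (by linear_combination h - hy0))
          · refine ⟨t0, ⟨hti0, htj0⟩, hx1, ?_⟩
            intro h
            exact ht0ne (by linear_combination h - hy0)
        · exact ⟨0, ⟨zero_mem _, zero_mem _⟩, by simpa using hx0, by simpa using hy0⟩
    refine ⟨w0 + t, ?_, ?_⟩
    · apply adjlem i
      · exact fun h => htx h.symm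
      · have : x + (w0 + t) = (x - y) * a + t := by linear_combination hw0x
        rw [this]
        exact add_mem (Ideal.mul_mem_left _ _ ha) htmem.1
    · apply adjlem j
      · exact hty
      · have : (w0 + t) + y = (y - x) * b + t := by linear_combination hw0y
        rw [this]
        exact add_mem (Ideal.mul_mem_left _ _ hb) htmem.2
  -- distance bound
  have hedist2 : ∀ x y : R, G.edist x y ≤ 2 := by
    intro x y
    rcases eq_or_ne x y with rfl | hxy
    · simp [SimpleGraph.edist_self]
    · obtain ⟨w, h1, h2⟩ := common x y hxy
      have := SimpleGraph.edist_le (SimpleGraph.Walk.cons h1 h2.toWalk)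
      simpa using this
  have hconn : G.Connected := by
    rw [SimpleGraph.connected_iff]
    refine ⟨fun x y => ?_, ⟨0⟩⟩
    rcases eq_or_ne x y with rfl | hxy
    · exact SimpleGraph.Reachable.refl x
    · obtain ⟨w, h1, h2⟩ := common x y hxy
      exact ⟨SimpleGraph.Walk.cons h1 h2.toWalk⟩
  refine ⟨hconn, le_antisymm (SimpleGraph.ediam_le_of_edist_le hedist2) ?_⟩
  -- 0 and 1 are not adjacent
  have hnadj : ¬ G.Adj (0 : R) 1 := by
    rintro ⟨-, hmem⟩
    rw [hD] at hmem
    rw [zero_pow (by omega), one_pow, zero_add] at hmem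
    obtain ⟨m, hm⟩ := Set.mem_iUnion.1 hmem
    exact (hprime m).ne_top (Ideal.eq_top_iff_one _ |>.2 hm)
  have h01 : (0 : R) ≠ 1 := zero_ne_one
  have hpos : 0 < G.edist 0 1 := SimpleGraph.edist_pos_of_ne h01
  have hne1 : G.edist 0 1 ≠ 1 := fun h => hnadj (SimpleGraph.edist_eq_one_iff_adj.1 h)
  have h2le : (2 : ℕ∞) ≤ G.edist 0 1 := by
    have h1lt : (1 : ℕ∞) < G.edist 0 1 :=
      lt_of_le_of_ne (Order.one_le_iff_pos.mpr hpos) (Ne.symm hne1)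
    exact Order.add_one_le_of_lt h1lt
  exact le_trans h2le SimpleGraph.edist_le_ediam
end

section
/- Let R be an integral domain, k ≥ 2, and let M_1, …, M_k be pairwise distinct maximal ideals of R. Let D = M_1 ∪ ⋯ ∪ M_k, and let n ≥ 1 be an odd integer. Then the n-total graph n-TG(R, D) is connected and its diameter equals 2. -/
private lemma pow_add_mem_of_add_mem {R : Type*} [CommRing R] {I : Ideal R} {n : ℕ}
    (hodd : Odd n) {a b : R} (h : a + b ∈ I) : a ^ n + b ^ n ∈ I := by
  obtain ⟨c, hc⟩ : a - (-b) ∣ a ^ n - (-b) ^ n := sub_dvd_pow_sub_pow a (-b) n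
  rw [hodd.neg_pow, sub_neg_eq_add, sub_neg_eq_add] at hc
  rw [hc]
  exact I.mul_mem_right c h

theorem stmt_8 {R : Type*} [CommRing R] [IsDomain R]
    (k : ℕ) (hk : 2 ≤ k) (M : Fin k → Ideal R) (hmax : ∀ i, (M i).IsMaximal)
    (hdistinct : ∀ i j, i ≠ j → M i ≠ M j)
    (D : Set R) (hD : D = ⋃ i, (M i : Set R))
    (n : ℕ) (hn : 1 ≤ n) (hodd : Odd n) :
    (nTotalGraph D n).Connected ∧ (nTotalGraph D n).ediam = 2 := by
  have i0 : Fin k := ⟨0, by omega⟩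
  have i1 : Fin k := ⟨1, by omega⟩
  have hne01 : M (⟨0, by omega⟩ : Fin k) ≠ M ⟨1, by omega⟩ :=
    hdistinct _ _ (by simp [Fin.ext_iff])
  have hsup : M (⟨0, by omega⟩ : Fin k) ⊔ M ⟨1, by omega⟩ = ⊤ :=
    (hmax _).coprime_of_ne (hmax _) hne01
  have hmemD : ∀ (i : Fin k) (r : R), r ∈ M i → r ∈ D := by
    intro i r hr
    rw [hD]
    exact Set.mem_iUnion.mpr ⟨i, hr⟩
  -- key: for distinct x y, edist ≤ 2
  have key : ∀ x y : R, x ≠ y → (nTotalGraph D n).edist x y ≤ 2 := by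
    intro x y hxy
    have hmem : x - y ∈ M (⟨0, by omega⟩ : Fin k) ⊔ M ⟨1, by omega⟩ := by
      rw [hsup]; trivial
    obtain ⟨u, hu, v, hv, huv⟩ := Submodule.mem_sup.mp hmem
    set z : R := -x + u with hz
    have hzx : z + x ∈ M (⟨0, by omega⟩ : Fin k) := by
      have : z + x = u := by ring
      rwa [this]
    have hzy : z + y ∈ M (⟨1, by omega⟩ : Fin k) := by
      have : z + y = -v := by rw [hz]; linear_combination huv
      rw [this]
      exact (M _).neg_mem hv
    by_cases h1 : z = x
    · -- x + y ∈ M i1, so adjacent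
      have hadj : (nTotalGraph D n).Adj x y :=
        ⟨hxy, hmemD _ _ (pow_add_mem_of_add_mem hodd (h1 ▸ hzy))⟩
      calc (nTotalGraph D n).edist x y ≤ 1 :=
            le_of_eq (SimpleGraph.edist_eq_one_iff_adj.mpr hadj)
        _ ≤ 2 := by norm_num
    · by_cases h2 : z = y
      · have hxy' : x + y ∈ M (⟨0, by omega⟩ : Fin k) := by
          rw [add_comm]; exact h2 ▸ hzx
        have hadj : (nTotalGraph D n).Adj x y :=
          ⟨hxy, hmemD _ _ (pow_add_mem_of_add_mem hodd hxy')⟩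
        calc (nTotalGraph D n).edist x y ≤ 1 :=
              le_of_eq (SimpleGraph.edist_eq_one_iff_adj.mpr hadj)
          _ ≤ 2 := by norm_num
      · have hadj1 : (nTotalGraph D n).Adj x z := by
          refine ⟨Ne.symm h1, hmemD ⟨0, by omega⟩ _ (pow_add_mem_of_add_mem hodd ?_)⟩
          rwa [add_comm]
        have hadj2 : (nTotalGraph D n).Adj z y :=
          ⟨h2, hmemD _ _ (pow_add_mem_of_add_mem hodd hzy)⟩
        calc (nTotalGraph D n).edist x y
            ≤ (SimpleGraph.Walk.cons hadj1
                (SimpleGraph.Walk.cons hadj2 SimpleGraph.Walk.nil)).length :=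
              SimpleGraph.edist_le _
          _ = 2 := by simp
  have hle : ∀ x y : R, (nTotalGraph D n).edist x y ≤ 2 := by
    intro x y
    rcases eq_or_ne x y with rfl | h
    · simp [SimpleGraph.edist_self]
    · exact key x y h
  have hconn : (nTotalGraph D n).Connected := by
    constructor
    · intro x y
      rcases eq_or_ne x y with rfl | h
      · exact SimpleGraph.Reachable.refl x
      · refine SimpleGraph.reachable_of_edist_ne_top (fun ht => ?_)
        have h2 := key x y h
        rw [ht] at h2
        exact (by norm_num : ¬ (⊤ : ℕ∞) ≤ 2) h2
  refine ⟨hconn, le_antisymm (SimpleGraph.ediam_le_iff.mpr hle) ?_⟩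
  -- vertices 1 and 0 are nonadjacent and distinct
  have hnadj : ¬ (nTotalGraph D n).Adj 1 0 := by
    rintro ⟨-, hmem⟩
    rw [hD] at hmem
    obtain ⟨s, ⟨i, rfl⟩, hs⟩ := hmem
    have : (1 : R) ∈ M i := by
      have hzero : (0 : R) ^ n = 0 := zero_pow (by omega)
      simpa [hzero] using hs
    exact (hmax i).ne_top ((Ideal.eq_top_iff_one _).mpr this)
  have hne : (1 : R) ≠ 0 := one_ne_zero
  have e0 : (nTotalGraph D n).edist 1 0 ≠ 0 :=
    fun h => hne (SimpleGraph.edist_eq_zero_iff.mp h)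
  have e1 : (nTotalGraph D n).edist 1 0 ≠ 1 :=
    fun h => hnadj (SimpleGraph.edist_eq_one_iff_adj.mp h)
  have h1lt : 1 < (nTotalGraph D n).edist 1 0 :=
    lt_of_le_of_ne (ENat.one_le_iff_ne_zero.mpr e0) (Ne.symm e1)
  calc (2 : ℕ∞) = 1 + 1 := by norm_num
    _ ≤ (nTotalGraph D n).edist 1 0 := Order.add_one_le_of_lt h1lt
    _ ≤ (nTotalGraph D n).ediam := SimpleGraph.edist_le_ediam
end

section
/- Let R be an integral domain, k ≥ 2, and let P_1, …, P_k be prime ideals of R that are pairwise incomparable (for all i ≠ j, P_i ⊄ P_j and P_j ⊄ P_i). Let D = P_1 ∪ ⋯ ∪ P_k, and let n ≥ 1 be an even integer. If at least two of the ideals are coprime (there exist i ≠ j with P_i + P_j = R) and there exists u ∈ R with u^n = -1, then the n-total graph n-TG(R, D) is connected and its diameter equals 2. -/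
private lemma pow_sub_pow_mem {R : Type*} [CommRing R] (I : Ideal R) {a b : R}
    (h : a - b ∈ I) (n : ℕ) : a ^ n - b ^ n ∈ I := by
  obtain ⟨c, hc⟩ := sub_dvd_pow_sub_pow a b n
  rw [hc]
  exact I.mul_mem_right c h

theorem stmt_9 {R : Type*} [CommRing R] [IsDomain R]
    (k : ℕ) (hk : 2 ≤ k) (P : Fin k → Ideal R) (hprime : ∀ i, (P i).IsPrime)
    (hincomp : ∀ i j, i ≠ j → ¬ P i ≤ P j)
    (D : Set R) (hD : D = ⋃ i, (P i : Set R))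
    (n : ℕ) (hn : 1 ≤ n) (heven : Even n)
    (hcoprime : ∃ i j, i ≠ j ∧ P i ⊔ P j = ⊤)
    (hu : ∃ u : R, u ^ n = -1) :
    (nTotalGraph D n).Connected ∧ (nTotalGraph D n).ediam = 2 := by
  obtain ⟨u, hu⟩ := hu
  obtain ⟨i, j, hij, hsum⟩ := hcoprime
  -- membership in D
  have hmemD : ∀ (l : Fin k) (r : R), r ∈ P l → r ∈ D := by
    intro l r hr
    rw [hD]
    exact Set.mem_iUnion.mpr ⟨l, hr⟩
  -- key construction: for x ≠ y non-adjacent, a common neighbor exists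
  have key : ∀ x y : R, x ≠ y → x ^ n + y ^ n ∉ D →
      ∃ z, (nTotalGraph D n).Adj x z ∧ (nTotalGraph D n).Adj z y := by
    intro x y hxy hnadj
    have h1 : (1 : R) ∈ P i ⊔ P j := by rw [hsum]; trivial
    obtain ⟨a, ha, b, hb, hab⟩ := Submodule.mem_sup.mp h1
    set z := u * y * a + u * x * b with hz
    have hzi : z - u * x ∈ P i := by
      have h : z - u * x = a * (u * y - u * x) := by
        rw [hz]; linear_combination (u * x) * hab
      rw [h]
      exact (P i).mul_mem_right _ ha
    have hzj : z - u * y ∈ P j := by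
      have h : z - u * y = b * (u * x - u * y) := by
        rw [hz]; linear_combination (u * y) * hab
      rw [h]
      exact (P j).mul_mem_right _ hb
    -- x^n + z^n ∈ P i
    have hxz : x ^ n + z ^ n ∈ P i := by
      have h2 : z ^ n - (u * x) ^ n ∈ P i := pow_sub_pow_mem _ hzi n
      have h3 : (u * x) ^ n = -x ^ n := by rw [mul_pow, hu]; ring
      have : x ^ n + z ^ n = z ^ n - (u * x) ^ n := by rw [h3]; ring
      rwa [this]
    have hyz : y ^ n + z ^ n ∈ P j := by
      have h2 : z ^ n - (u * y) ^ n ∈ P j := pow_sub_pow_mem _ hzj n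
      have h3 : (u * y) ^ n = -y ^ n := by rw [mul_pow, hu]; ring
      have : y ^ n + z ^ n = z ^ n - (u * y) ^ n := by rw [h3]; ring
      rwa [this]
    have hzx : z ≠ x := by
      intro h
      apply hnadj
      have : x - u * y ∈ P j := h ▸ hzj
      have h2 : x ^ n - (u * y) ^ n ∈ P j := pow_sub_pow_mem _ this n
      have h3 : (u * y) ^ n = -y ^ n := by rw [mul_pow, hu]; ring
      have : x ^ n + y ^ n ∈ P j := by
        have : x ^ n + y ^ n = x ^ n - (u * y) ^ n := by rw [h3]; ring
        rwa [this]
      exact hmemD j _ this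
    have hzy : z ≠ y := by
      intro h
      apply hnadj
      have : y - u * x ∈ P i := h ▸ hzi
      have h2 : y ^ n - (u * x) ^ n ∈ P i := pow_sub_pow_mem _ this n
      have h3 : (u * x) ^ n = -x ^ n := by rw [mul_pow, hu]; ring
      have : x ^ n + y ^ n ∈ P i := by
        have : x ^ n + y ^ n = y ^ n - (u * x) ^ n := by rw [h3]; ring
        rwa [this]
      exact hmemD i _ this
    exact ⟨z, ⟨hzx.symm, hmemD i _ hxz⟩,
      ⟨hzy, by rw [add_comm]; exact hmemD j _ hyz⟩⟩
  -- every pair has edist ≤ 2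
  have hedist : ∀ x y : R, (nTotalGraph D n).edist x y ≤ 2 := by
    intro x y
    by_cases hxy : x = y
    · subst hxy; simp [SimpleGraph.edist_self]
    by_cases hadj : x ^ n + y ^ n ∈ D
    · have hAdj : (nTotalGraph D n).Adj x y := ⟨hxy, hadj⟩
      calc (nTotalGraph D n).edist x y = 1 :=
            SimpleGraph.edist_eq_one_iff_adj.mpr hAdj
        _ ≤ 2 := by norm_num
    · obtain ⟨z, h1, h2⟩ := key x y hxy hadj
      calc (nTotalGraph D n).edist x y
          ≤ ((h1.toWalk.append h2.toWalk).length : ℕ∞) :=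
            SimpleGraph.edist_le _
        _ = 2 := by simp
  have hconn : (nTotalGraph D n).Connected := by
    rw [SimpleGraph.connected_iff]
    refine ⟨fun x y => ?_, ⟨0⟩⟩
    apply SimpleGraph.reachable_of_edist_ne_top
    intro h
    have := hedist x y
    rw [h] at this
    simp at this
  refine ⟨hconn, le_antisymm (SimpleGraph.ediam_le_of_edist_le hedist) ?_⟩
  -- lower bound: 0 and 1 are not adjacent
  have h01 : ¬ (nTotalGraph D n).Adj 0 1 := by
    rintro ⟨-, hmem⟩
    rw [hD] at hmem
    obtain ⟨S, ⟨l, rfl⟩, hS⟩ := hmem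
    have : (1 : R) ∈ P l := by
      simpa [zero_pow (by omega : n ≠ 0), one_pow] using hS
    exact (hprime l).ne_top ((Ideal.eq_top_iff_one _).mpr this)
  have hne : (0 : R) ≠ 1 := zero_ne_one
  have h1 : 0 < (nTotalGraph D n).edist 0 1 :=
    SimpleGraph.edist_pos_of_ne hne
  have h2 : (nTotalGraph D n).edist 0 1 ≠ 1 :=
    fun h => h01 (SimpleGraph.edist_eq_one_iff_adj.mp h)
  have h3 : 1 < (nTotalGraph D n).edist 0 1 :=
    lt_of_le_of_ne (Order.one_le_iff_pos.mpr h1) (Ne.symm h2)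
  have h4 : (2 : ℕ∞) ≤ (nTotalGraph D n).edist 0 1 := by
    have := Order.add_one_le_of_lt h3
    rw [show (2 : ℕ∞) = 1 + 1 by norm_num]
    exact this
  exact h4.trans SimpleGraph.edist_le_ediam
end

section
/- Let R be an integral domain, k ≥ 2, and let P_1, …, P_k be prime ideals of R that are pairwise incomparable (for all i ≠ j, P_i ⊄ P_j and P_j ⊄ P_i). Let D = P_1 ∪ ⋯ ∪ P_k, and let n ≥ 1 be an odd integer. If the subgraph of n-TG(R, D) induced on R \ D is connected, then n-TG(R, D) is connected. -/
theorem stmt_10 {R : Type*} [CommRing R] [IsDomain R]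
    (k : ℕ) (hk : 2 ≤ k) (P : Fin k → Ideal R) (hprime : ∀ i, (P i).IsPrime)
    (hincomp : ∀ i j, i ≠ j → ¬ P i ≤ P j)
    (D : Set R) (hD : D = ⋃ i, (P i : Set R))
    (n : ℕ) (hn : 1 ≤ n) (hodd : Odd n)
    (hconn : ((nTotalGraph D n).induce Dᶜ).Connected) :
    (nTotalGraph D n).Connected := by
  classical
  set G := nTotalGraph D n with hG
  have hmemD : ∀ x : R, x ∈ D ↔ ∃ i, x ∈ P i := by
    intro x; rw [hD]; simp [Set.mem_iUnion]
  -- key: every vertex reaches a vertex outside D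
  have key : ∀ m : ℕ, ∀ x : R,
      (Finset.univ.filter fun l => x ∈ P l).card ≤ m →
      ∃ z : R, z ∉ D ∧ G.Reachable x z := by
    intro m
    induction m with
    | zero =>
      intro x hx
      refine ⟨x, ?_, SimpleGraph.Reachable.refl x⟩
      rw [hmemD]
      rintro ⟨i, hi⟩
      have : i ∈ Finset.univ.filter fun l => x ∈ P l := by simp [hi]
      have := Finset.card_pos.mpr ⟨i, this⟩
      omega
    | succ m ih =>
      intro x hx
      by_cases hxD : x ∈ D
      · obtain ⟨i, hi⟩ := (hmemD x).mp hxD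
        -- choose elements of P j \ P i for j ≠ i
        have Hex : ∀ j : Fin k, j ≠ i → ∃ a, a ∈ P j ∧ a ∉ P i := by
          intro j hj
          have := hincomp j i hj
          rcases SetLike.not_le_iff_exists.mp this with ⟨a, ha, ha'⟩
          exact ⟨a, ha, ha'⟩
        set f : Fin k → R := fun j => if h : j ≠ i then (Hex j h).choose else 1 with hf
        have hfj : ∀ j : Fin k, j ≠ i → f j ∈ P j ∧ f j ∉ P i := by
          intro j hj
          simp only [hf, dif_pos hj]
          exact (Hex j hj).choose_spec
        set y : R := ∏ j ∈ Finset.univ.erase i, f j with hy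
        have hyPj : ∀ j : Fin k, j ≠ i → y ∈ P j := by
          intro j hj
          have hjmem : j ∈ Finset.univ.erase i := by simp [hj]
          obtain ⟨c, hc⟩ := Finset.dvd_prod_of_mem f hjmem
          rw [hy, hc]
          exact Ideal.mul_mem_right _ _ (hfj j hj).1
        have hyPi : y ∉ P i := by
          intro hmem
          have := (Ideal.IsPrime.prod_mem_iff (hp := hprime i)).mp hmem
          obtain ⟨j, hjmem, hjP⟩ := this
          have hj : j ≠ i := (Finset.mem_erase.mp hjmem).1
          exact (hfj j hj).2 hjP
        -- y properties for y^2 as well; choose w ∈ {y, y^2} with w ≠ 2 * x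
        have hy0 : y ≠ 0 := fun h => hyPi (h ▸ (P i).zero_mem)
        have hy1 : y ≠ 1 := by
          intro h
          -- pick j ≠ i
          have : Nontrivial (Fin k) := by
            have : 1 < k := hk
            exact Fin.nontrivial_iff_two_le.mpr hk
          obtain ⟨j, hj⟩ := exists_ne i
          have := hyPj j hj
          rw [h] at this
          exact (hprime j).ne_top (Ideal.eq_top_iff_one _ |>.mpr this)
        obtain ⟨w, hwPj, hwPi, hw2x⟩ :
            ∃ w : R, (∀ j : Fin k, j ≠ i → w ∈ P j) ∧ w ∉ P i ∧ w ≠ 2 * x := by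
          by_cases hc : y = 2 * x
          · refine ⟨y ^ 2, fun j hj => ?_, fun h => ?_, fun h => ?_⟩
            · rw [sq]; exact Ideal.mul_mem_right _ _ (hyPj j hj)
            · exact hyPi ((hprime i).mem_of_pow_mem 2 h)
            · rw [← hc] at h
              have : y * (y - 1) = 0 := by ring_nf; rw [sq] at h; linear_combination h
              rcases mul_eq_zero.mp this with h0 | h1
              · exact hy0 h0
              · exact hy1 (by linear_combination h1)
          · exact ⟨y, hyPj, hyPi, hc⟩
        set z : R := w - x with hz
        -- adjacency x ~ z
        have hxz : x ≠ z := by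
          intro h
          apply hw2x
          rw [hz] at h
          linear_combination -h
        -- pick j ≠ i
        have hnt : Nontrivial (Fin k) := Fin.nontrivial_iff_two_le.mpr hk
        obtain ⟨j, hj⟩ := exists_ne i
        have hadj : G.Adj x z := by
          refine ⟨hxz, ?_⟩
          have hdvd : x + z ∣ x ^ n + z ^ n := Odd.add_dvd_pow_add_pow x z hodd
          obtain ⟨c, hc⟩ := hdvd
          have hxzP : x + z ∈ P j := by
            have : x + z = w := by rw [hz]; ring
            rw [this]; exact hwPj j hj
          rw [hmemD]
          exact ⟨j, hc ▸ Ideal.mul_mem_right _ _ hxzP⟩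
        -- membership of z in primes
        have hzP : ∀ l : Fin k, z ∈ P l ↔ (x ∈ P l ∧ l ≠ i) := by
          intro l
          constructor
          · intro hzl
            rcases eq_or_ne l i with rfl | hl
            · exfalso
              apply hwPi
              have hwe : w = z + x := by rw [hz]; ring
              rw [hwe]
              exact (P l).add_mem hzl hi
            · refine ⟨?_, hl⟩
              have : x = w - z := by rw [hz]; ring
              rw [this]; exact (P l).sub_mem (hwPj l hl) hzl
          · rintro ⟨hxl, hl⟩
            rw [hz]; exact (P l).sub_mem (hwPj l hl) hxl
        have hcard : (Finset.univ.filter fun l => z ∈ P l).card ≤ m := by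
          have hsub : (Finset.univ.filter fun l => z ∈ P l) =
              (Finset.univ.filter fun l => x ∈ P l).erase i := by
            ext l
            simp only [Finset.mem_filter, Finset.mem_erase, Finset.mem_univ, true_and]
            rw [hzP l]; tauto
          have hiin : i ∈ Finset.univ.filter fun l => x ∈ P l := by simp [hi]
          rw [hsub, Finset.card_erase_of_mem hiin]
          omega
        obtain ⟨zz, hzz, hreach⟩ := ih z hcard
        exact ⟨zz, hzz, (hadj.reachable).trans hreach⟩
      · exact ⟨x, hxD, SimpleGraph.Reachable.refl x⟩
  have key' : ∀ x : R, ∃ z : R, z ∉ D ∧ G.Reachable x z := fun x =>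
    key _ x le_rfl
  constructor
  intro x y
  obtain ⟨zx, hzx, hrx⟩ := key' x
  obtain ⟨zy, hzy, hry⟩ := key' y
  have hmid : G.Reachable zx zy := by
    have := hconn.preconnected ⟨zx, hzx⟩ ⟨zy, hzy⟩
    have := this.map (SimpleGraph.Embedding.induce (Dᶜ : Set R)).toHom
    simpa using this
  exact (hrx.trans hmid).trans hry.symm
end

section
/- Let R be an integral domain, k ≥ 2, and let P_1, …, P_k be prime ideals of R that are pairwise incomparable (for all i ≠ j, P_i ⊄ P_j and P_j ⊄ P_i). Let D = P_1 ∪ ⋯ ∪ P_k, let n ≥ 1 be an even integer, and suppose there exists u ∈ R with u^n = -1. If the subgraph of n-TG(R, D) induced on R \ D is connected, then n-TG(R, D) is connected. -/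
theorem stmt_11 {R : Type*} [CommRing R] [IsDomain R]
    (k : ℕ) (hk : 2 ≤ k) (P : Fin k → Ideal R) (hprime : ∀ i, (P i).IsPrime)
    (hincomp : ∀ i j, i ≠ j → ¬ P i ≤ P j)
    (D : Set R) (hD : D = ⋃ i, (P i : Set R))
    (n : ℕ) (hn : 1 ≤ n) (heven : Even n) (hu : ∃ u : R, u ^ n = -1)
    (hconn : ((nTotalGraph D n).induce Dᶜ).Connected) :
    (nTotalGraph D n).Connected := by
  classical
  obtain ⟨u, hun⟩ := hu
  have hmemD : ∀ {z : R}, z ∈ D ↔ ∃ l, z ∈ P l := by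
    intro z; rw [hD]; simp [Set.mem_iUnion]
  -- Step 1: any x ∈ D avoiding some P j has a neighbor outside D.
  have h1 : ∀ x : R, x ∈ D → ∀ j : Fin k, x ∉ P j →
      ∃ c, c ∉ D ∧ (nTotalGraph D n).Adj x c := by
    intro x hxD j hxj
    have hux : u * x ∉ P j := by
      intro h
      have hpow : (u * x) ^ n ∈ P j := Ideal.pow_mem_of_mem _ h n (lt_of_lt_of_le one_pos hn)
      rw [mul_pow, hun, neg_mul, one_mul] at hpow
      exact hxj ((hprime j).mem_of_pow_mem n ((P j).neg_mem_iff.mp hpow))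
    set S : Finset (Fin k) := Finset.univ.filter (fun l => l ≠ j ∧ u * x ∈ P l) with hS
    have hjS : j ∈ Sᶜ := by simp [hS]
    set I : Ideal R := ∏ l ∈ Sᶜ, P l with hI
    have hIle : ∀ l ∈ Sᶜ, I ≤ P l := by
      intro l hl
      exact le_trans Ideal.prod_le_inf (Finset.inf_le hl)
    have hnotsub : ¬ (I : Set R) ⊆ ⋃ l ∈ (S : Set (Fin k)), (P l : Set R) := by
      intro hsub
      rw [Ideal.subset_union_prime j j (fun i _ _ _ => hprime i)] at hsub
      obtain ⟨l, hlS, hIl⟩ := hsub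
      rw [hI, (hprime l).prod_le] at hIl
      obtain ⟨l', hl', hle⟩ := hIl
      have : l' ≠ l := by
        intro h; rw [h] at hl'; exact (Finset.mem_compl.mp hl') hlS
      exact hincomp l' l this hle
    obtain ⟨t, htI, htU⟩ := Set.not_subset.mp hnotsub
    set c : R := u * x + t with hc
    have hcP : ∀ l, c ∉ P l := by
      intro l hcl
      by_cases hlS : l ∈ S
      · have hl' := Finset.mem_filter.mp hlS
        have : t ∈ P l := by
          have : c - u * x ∈ P l := (P l).sub_mem hcl hl'.2.2
          simpa [hc] using this
        exact htU (Set.mem_biUnion hlS this)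
      · have htl : t ∈ P l := hIle l (Finset.mem_compl.mpr hlS) htI
        have huxl : u * x ∉ P l := by
          by_cases hlj : l = j
          · rw [hlj]; exact hux
          · intro h
            exact hlS (Finset.mem_filter.mpr ⟨Finset.mem_univ l, hlj, h⟩)
        exact huxl (by simpa [hc] using (P l).sub_mem hcl htl)
    have hcD : c ∉ D := fun h => by
      obtain ⟨l, hl⟩ := hmemD.mp h
      exact hcP l hl
    refine ⟨c, hcD, ⟨fun h => hcD (h ▸ hxD), ?_⟩⟩
    have htj : t ∈ P j := hIle j hjS htI
    obtain ⟨w, hw⟩ := sub_dvd_pow_sub_pow c (u * x) n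
    have hsum : x ^ n + c ^ n = (c - u * x) * w := by
      rw [← hw, mul_pow, hun]; ring
    have : x ^ n + c ^ n ∈ P j := by
      rw [hsum]
      exact Ideal.mul_mem_right _ _ (by simpa [hc] using htj)
    exact hmemD.mpr ⟨j, this⟩
  -- Step 2: any x ∈ D reaches some vertex outside D.
  have h2 : ∀ x : R, x ∈ D → ∃ c, c ∉ D ∧ (nTotalGraph D n).Reachable x c := by
    intro x hxD
    by_cases hall : ∃ j, x ∉ P j
    · obtain ⟨j, hj⟩ := hall
      obtain ⟨c, hcD, hadj⟩ := h1 x hxD j hj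
      exact ⟨c, hcD, hadj.reachable⟩
    · push_neg at hall
      have h0 : (0 : ℕ) < k := lt_of_lt_of_le two_pos hk
      have h1k : (1 : ℕ) < k := lt_of_lt_of_le one_lt_two hk
      set i0 : Fin k := ⟨0, h0⟩
      set i1 : Fin k := ⟨1, h1k⟩
      have hne : i0 ≠ i1 := by simp [i0, i1, Fin.ext_iff]
      have := hincomp i0 i1 hne
      rw [SetLike.le_def] at this
      push_neg at this
      obtain ⟨w, hw0, hw1⟩ := this
      have hwD : w ∈ D := hmemD.mpr ⟨i0, hw0⟩
      have hadj : (nTotalGraph D n).Adj x w := by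
        refine ⟨fun h => hw1 (h ▸ hall i1), ?_⟩
        exact hmemD.mpr ⟨i0, (P i0).add_mem
          (Ideal.pow_mem_of_mem _ (hall i0) n (lt_of_lt_of_le one_pos hn))
          (Ideal.pow_mem_of_mem _ hw0 n (lt_of_lt_of_le one_pos hn))⟩
      obtain ⟨c, hcD, hadj2⟩ := h1 w hwD i1 hw1
      exact ⟨c, hcD, hadj.reachable.trans hadj2.reachable⟩
  -- Step 3: every vertex reaches some vertex outside D.
  have h3 : ∀ v : R, ∃ c, c ∉ D ∧ (nTotalGraph D n).Reachable v c := by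
    intro v
    by_cases hv : v ∈ D
    · exact h2 v hv
    · exact ⟨v, hv, SimpleGraph.Reachable.refl v⟩
  rw [SimpleGraph.connected_iff]
  refine ⟨fun x y => ?_, ⟨0⟩⟩
  obtain ⟨cx, hcx, rx⟩ := h3 x
  obtain ⟨cy, hcy, ry⟩ := h3 y
  have hmid := hconn.preconnected ⟨cx, hcx⟩ ⟨cy, hcy⟩
  have hmid' := hmid.map (SimpleGraph.Embedding.induce (Dᶜ : Set R)).toHom
  exact (rx.trans hmid').trans ry.symm
end

section
/- Let R be an integral domain, k ≥ 2, and let P_1, …, P_k be prime ideals of R that are pairwise incomparable (for all i ≠ j, P_i ⊄ P_j and P_j ⊄ P_i). Let D = P_1 ∪ ⋯ ∪ P_k, and let n ≥ 1 be an odd integer. Then the n-total graph n-TG(R, D) is connected if and only if there exist finitely many elements x_1, …, x_m ∈ D whose generated ideal is all of R, i.e., if and only if the ideal of R generated by the set D is the whole ring R. -/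
theorem stmt_12 {R : Type*} [CommRing R] [IsDomain R]
    (k : ℕ) (hk : 2 ≤ k) (P : Fin k → Ideal R) (hprime : ∀ i, (P i).IsPrime)
    (hincomp : ∀ i j, i ≠ j → ¬ P i ≤ P j)
    (D : Set R) (hD : D = ⋃ i, (P i : Set R))
    (n : ℕ) (hn : 1 ≤ n) (hodd : Odd n) :
    (nTotalGraph D n).Connected ↔ Ideal.span D = ⊤ := by
  have hk0 : 0 < k := by omega
  have i0 : Fin k := ⟨0, hk0⟩
  have h0D : (0 : R) ∈ D := by
    rw [hD]; exact Set.mem_iUnion.2 ⟨i0, (P i0).zero_mem⟩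
  have hmul : ∀ (r : R) {d : R}, d ∈ D → r * d ∈ D := by
    intro r d hd
    rw [hD] at hd ⊢
    obtain ⟨i, hi⟩ := Set.mem_iUnion.1 hd
    exact Set.mem_iUnion.2 ⟨i, Ideal.mul_mem_left _ r hi⟩
  constructor
  · -- connected → span = ⊤
    intro hconn
    have hreach : (nTotalGraph D n).Reachable 0 1 := hconn.preconnected 0 1
    obtain ⟨w⟩ := hreach
    have key : ∀ (x y : R) (_ : (nTotalGraph D n).Walk x y),
        x ^ n ∈ Ideal.span D → y ^ n ∈ Ideal.span D := by
      intro x y w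
      induction w with
      | nil => exact fun h => h
      | cons h p ih =>
        intro hx
        apply ih
        have hmem : _ ∈ Ideal.span D := Ideal.subset_span (show _ ≠ _ ∧ _ ∈ D from h).2
        have := Ideal.sub_mem _ hmem hx
        simpa using this
    have h1 : (1 : R) ^ n ∈ Ideal.span D := by
      apply key 0 1 w
      rw [zero_pow (by omega : n ≠ 0)]
      exact Ideal.zero_mem _
    rw [one_pow] at h1
    exact Ideal.eq_top_iff_one _ |>.2 h1
  · -- span = ⊤ → connected
    intro hspan
    -- step lemma
    have step : ∀ (x p : R), p ∈ D → (nTotalGraph D n).Reachable x (-x + p) := by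
      intro x p hp
      by_cases hxp : x = -x + p
      · rw [← hxp]
      · refine SimpleGraph.Adj.reachable (show x ≠ -x + p ∧ x ^ n + (-x + p) ^ n ∈ D from ⟨hxp, ?_⟩)
        rw [hD] at hp ⊢
        obtain ⟨i, hi⟩ := Set.mem_iUnion.1 hp
        refine Set.mem_iUnion.2 ⟨i, ?_⟩
        have : ((x ^ n + (-x + p) ^ n : R) : R ⧸ P i) = 0 := by
          have hp0 : Ideal.Quotient.mk (P i) p = 0 := (Ideal.Quotient.eq_zero_iff_mem).2 hi
          rw [map_add, map_pow, map_pow, map_add, map_neg, hp0, add_zero,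
            Odd.neg_pow hodd, add_neg_cancel]
        exact (Ideal.Quotient.eq_zero_iff_mem).1 this
    set T : Set R := {z | (nTotalGraph D n).Reachable 0 z} with hT
    have hneg : ∀ z ∈ T, -z ∈ T := by
      intro z hz
      have := step z 0 h0D
      simpa [hT] using hz.trans (by simpa using this)
    have haddD : ∀ z ∈ T, ∀ p ∈ D, z + p ∈ T := by
      intro z hz p hp
      have h1 : -z ∈ T := hneg z hz
      have := step (-z) p hp
      have : ((- - z + p) : R) ∈ T := h1.trans this
      simpa using this
    -- every element of additive monoid closure of D is in T
    have hclos : ∀ w ∈ AddSubmonoid.closure D, w ∈ T := by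
      have hlist : ∀ l : List R, (∀ y ∈ l, y ∈ D) → l.sum ∈ T := by
        intro l
        induction l with
        | nil => intro _; simpa [hT] using SimpleGraph.Reachable.refl (0 : R)
        | cons a l ih =>
          intro hl
          have hsum : l.sum ∈ T := ih (fun y hy => hl y (List.mem_cons_of_mem a hy))
          have := haddD _ hsum a (hl a List.mem_cons_self)
          simpa [List.sum_cons, add_comm] using this
      intro w hw
      obtain ⟨l, hl, rfl⟩ := AddSubmonoid.exists_list_of_mem_closure hw
      exact hlist l hl
    -- span D ⊆ closure D
    have hsub : (Ideal.span D : Set R) ⊆ (AddSubmonoid.closure D : Set R) := by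
      intro x hx
      refine Submodule.span_induction (p := fun x _ => x ∈ AddSubmonoid.closure D)
        (fun d hd => AddSubmonoid.subset_closure hd) (AddSubmonoid.zero_mem _)
        (fun a b _ _ ha hb => AddSubmonoid.add_mem _ ha hb) ?_ hx
      intro r a _ ha
      simp only [smul_eq_mul]
      refine AddSubmonoid.closure_induction (fun d hd => AddSubmonoid.subset_closure (hmul r hd))
        ?_ ?_ ha
      · simp [AddSubmonoid.zero_mem]
      · intro a b _ _ ha hb
        rw [mul_add]
        exact AddSubmonoid.add_mem _ ha hb
    have hall : ∀ y : R, y ∈ T := by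
      intro y
      apply hclos
      apply hsub
      rw [hspan]; trivial
    exact ⟨fun x y => (hall x).symm.trans (hall y)⟩
end

section
/- Let R be an integral domain, k ≥ 2, and let P_1, …, P_k be prime ideals of R that are pairwise incomparable (for all i ≠ j, P_i ⊄ P_j and P_j ⊄ P_i). Let D = P_1 ∪ ⋯ ∪ P_k, let n ≥ 1 be an odd integer, and suppose R = (x_1, …, x_m) for some x_1, …, x_m ∈ D, where m is the minimum number of elements of D that generate R as an ideal (that is, m is the least natural number such that some m elements of D generate the unit ideal). Then the diameter of the n-total graph n-TG(R, D) equals m, and moreover the diameter equals the distance d(0, 1) between the vertices 0 and 1. -/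
/-- If there is a chain of length `t` whose consecutive entries are equal or adjacent,
then the extended distance between the endpoints is at most `t`. -/
lemma chain_edist_le {V : Type*} (G : SimpleGraph V) (a : ℕ → V) :
    ∀ t : ℕ, (∀ i < t, a i = a (i + 1) ∨ G.Adj (a i) (a (i + 1))) →
      G.edist (a 0) (a t) ≤ t := by
  intro t
  induction t with
  | zero => intro _; simp [SimpleGraph.edist_self]
  | succ t ih =>
    intro h
    have h1 := ih (fun i hi => h i (Nat.lt_succ_of_lt hi))
    have h2 : G.edist (a t) (a (t + 1)) ≤ 1 := by
      rcases h t (Nat.lt_succ_self t) with he | ha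
      · rw [he]; simp [SimpleGraph.edist_self]
      · exact le_of_eq (SimpleGraph.edist_eq_one_iff_adj.mpr ha)
    calc G.edist (a 0) (a (t + 1))
        ≤ G.edist (a 0) (a t) + G.edist (a t) (a (t + 1)) := SimpleGraph.edist_triangle
      _ ≤ (t : ℕ∞) + 1 := add_le_add h1 h2
      _ = ((t + 1 : ℕ) : ℕ∞) := by push_cast; rfl

theorem stmt_13 {R : Type*} [CommRing R] [IsDomain R]
    (k : ℕ) (hk : 2 ≤ k) (P : Fin k → Ideal R) (hprime : ∀ i, (P i).IsPrime)
    (hincomp : ∀ i j, i ≠ j → ¬ P i ≤ P j)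
    (D : Set R) (hD : D = ⋃ i, (P i : Set R))
    (n : ℕ) (hn : 1 ≤ n) (hodd : Odd n)
    (m : ℕ)
    (hgen : ∃ x : Fin m → R, (∀ i, x i ∈ D) ∧ Ideal.span (Set.range x) = ⊤)
    (hmin : ∀ j : ℕ, (∃ x : Fin j → R, (∀ i, x i ∈ D) ∧ Ideal.span (Set.range x) = ⊤) → m ≤ j) :
    (nTotalGraph D n).ediam = m ∧
    (nTotalGraph D n).ediam = (nTotalGraph D n).edist 0 1 := by
  -- D is closed under scaling
  have hscale : ∀ (c d : R), d ∈ D → c * d ∈ D := by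
    intro c d hd
    rw [hD] at hd ⊢
    obtain ⟨S, ⟨i, rfl⟩, hS⟩ := hd
    exact Set.mem_iUnion.mpr ⟨i, Ideal.mul_mem_left _ c hS⟩
  -- key divisibility: if x + y ∈ D then x ^ n + y ^ n ∈ D (for odd n)
  have hdvd : ∀ x y : R, x + y ∈ D → x ^ n + y ^ n ∈ D := by
    intro x y hxy
    have hdd : (x + y) ∣ x ^ n + y ^ n := by
      have := sub_dvd_pow_sub_pow x (-y) n
      rwa [sub_neg_eq_add, hodd.neg_pow, sub_neg_eq_add] at this
    obtain ⟨c, hc⟩ := hdd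
    rw [hc, mul_comm]
    exact hscale c _ hxy
  -- upper bound : every pair of vertices is at distance ≤ m
  have hub : ∀ u v : R, (nTotalGraph D n).edist u v ≤ (m : ℕ∞) := by
    intro u v
    obtain ⟨x, hxD, hxspan⟩ := hgen
    have hm1 : 1 ≤ m := by
      by_contra hm0
      interval_cases m
      have : Set.range x = (∅ : Set R) := Set.range_eq_empty x
      rw [this, Ideal.span_empty] at hxspan
      exact one_ne_zero ((Submodule.mem_bot R).mp (hxspan ▸ Submodule.mem_top : (1 : R) ∈ (⊥ : Ideal R)))
    set w : R := (-1 : R) ^ (m - 1) with hw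
    have hww : w * w = 1 := by
      rw [hw, ← pow_add]
      exact Even.neg_one_pow ⟨m - 1, rfl⟩
    set t : R := w * v + u with ht
    have htmem : t ∈ Ideal.span (Set.range x) := hxspan ▸ Submodule.mem_top
    obtain ⟨c, hc⟩ := (Submodule.mem_span_range_iff_exists_fun R).mp htmem
    -- e : the m elements of D summing to t
    set e : ℕ → R := fun j => if h : j < m then c ⟨j, h⟩ * x ⟨j, h⟩ else 0 with he
    have heD : ∀ j < m, e j ∈ D := by
      intro j hj
      rw [he]
      simp only [hj, dif_pos]
      exact hscale _ _ (hxD ⟨j, hj⟩)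
    have hesum : ∑ j ∈ Finset.range m, e j = t := by
      rw [Finset.sum_range fun j => e j]
      · rw [← hc]
        apply Finset.sum_congr rfl
        intro i _
        rw [he]
        simp [i.isLt, smul_eq_mul]
    -- the chain
    set a : ℕ → R := fun i =>
      if i = m then v else (-1 : R) ^ i * (u - ∑ j ∈ Finset.range i, e j) with ha
    have ha0 : a 0 = u := by
      simp only [ha]
      rw [if_neg (by omega : ¬ 0 = m)]
      simp
    have ham : a m = v := by simp [ha]
    have hchain : ∀ i < m, a i = a (i + 1) ∨ (nTotalGraph D n).Adj (a i) (a (i + 1)) := by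
      intro i hi
      have hmem : a i + a (i + 1) ∈ D := by
        by_cases him : i + 1 = m
        · -- last step
          have hie : a i = (-1 : R) ^ i * (u - ∑ j ∈ Finset.range i, e j) := by
            simp only [ha]; rw [if_neg (by omega : ¬ i = m)]
          have hsplit : ∑ j ∈ Finset.range m, e j
              = (∑ j ∈ Finset.range i, e j) + e i := by
            rw [← him, Finset.sum_range_succ]
          have hei : e i = t - ∑ j ∈ Finset.range i, e j := by
            rw [← hesum, hsplit]; ring
          have hwi : (-1 : R) ^ i = w := by rw [hw, (by omega : m - 1 = i)]
          have : a i + a (i + 1) = w * e i := by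
            rw [hie, him, ham, hwi, hei, ht]
            have : w * (w * v + u - ∑ j ∈ Finset.range i, e j)
                = (w * w) * v + w * (u - ∑ j ∈ Finset.range i, e j) := by ring
            rw [this, hww]
            ring
          rw [this]
          exact hscale _ _ (heD i (by omega))
        · -- middle step
          have hie : a i = (-1 : R) ^ i * (u - ∑ j ∈ Finset.range i, e j) := by
            simp only [ha]; rw [if_neg (by omega : ¬ i = m)]
          have hie1 : a (i + 1) = (-1 : R) ^ (i + 1) *
              (u - ∑ j ∈ Finset.range (i + 1), e j) := by
            simp only [ha]; rw [if_neg him]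
          have : a i + a (i + 1) = (-1 : R) ^ i * e i := by
            rw [hie, hie1, Finset.sum_range_succ, pow_succ]
            ring
          rw [this]
          exact hscale _ _ (heD i hi)
      by_cases heq : a i = a (i + 1)
      · exact Or.inl heq
      · exact Or.inr ⟨heq, hdvd _ _ hmem⟩
    have := chain_edist_le (nTotalGraph D n) a m hchain
    rwa [ha0, ham] at this
  -- lower bound : the distance from 0 to 1 is at least m
  have hlb : (m : ℕ∞) ≤ (nTotalGraph D n).edist 0 1 := by
    have hne : (nTotalGraph D n).edist 0 1 ≠ ⊤ :=
      ((hub 0 1).trans_lt (WithTop.coe_lt_top m)).ne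
    obtain ⟨p, hp⟩ := SimpleGraph.exists_walk_of_edist_ne_top hne
    rw [← hp]
    rw [Nat.cast_le]
    apply hmin
    set g : ℕ → R := p.getVert with hg
    set L : ℕ := p.length with hL
    refine ⟨fun i : Fin L => g i ^ n + g (i + 1) ^ n, ?_, ?_⟩
    · intro i
      exact And.right (p.adj_getVert_succ i.isLt)
    · rw [Ideal.eq_top_iff_one]
      set d : Fin L → R := fun i => g i ^ n + g (i + 1) ^ n with hd'
      have hsummem : ∑ i : Fin L, (-1 : R) ^ (i : ℕ) * d i ∈ Ideal.span (Set.range d) := by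
        apply Ideal.sum_mem
        intro i _
        exact Ideal.mul_mem_left _ _ (Ideal.subset_span ⟨i, rfl⟩)
      have hsum : ∑ i : Fin L, (-1 : R) ^ (i : ℕ) * d i = -(-1 : R) ^ L := by
        have hfin : ∑ i : Fin L, (-1 : R) ^ (i : ℕ) * d i
            = ∑ i ∈ Finset.range L, (-1 : R) ^ i * (g i ^ n + g (i + 1) ^ n) := by
          rw [Finset.sum_range fun i => (-1 : R) ^ i * (g i ^ n + g (i + 1) ^ n)]
        have htel : ∑ i ∈ Finset.range L, (-1 : R) ^ i * (g i ^ n + g (i + 1) ^ n)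
            = (fun i => (-1 : R) ^ i * g i ^ n) 0 - (fun i => (-1 : R) ^ i * g i ^ n) L := by
          rw [← Finset.sum_range_sub' (fun i => (-1 : R) ^ i * g i ^ n) L]
          apply Finset.sum_congr rfl
          intro i _
          rw [pow_succ]
          ring
        have hg0 : g 0 = 0 := p.getVert_zero
        have hgL : g L = 1 := p.getVert_length
        rw [hfin, htel]
        simp only [hg0, hgL]
        rw [zero_pow (by omega : n ≠ 0), one_pow]
        ring
      have h1 : (1 : R) = (-(-1 : R) ^ L) * ∑ i : Fin L, (-1 : R) ^ (i : ℕ) * d i := by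
        rw [hsum, neg_mul_neg, ← pow_add]
        exact (Even.neg_one_pow ⟨L, rfl⟩).symm
      rw [h1]
      exact Ideal.mul_mem_left _ _ hsummem
  -- conclusion
  have hediam_le : (nTotalGraph D n).ediam ≤ (m : ℕ∞) :=
    SimpleGraph.ediam_le_of_edist_le fun u v => hub u v
  have hediam_ge : (m : ℕ∞) ≤ (nTotalGraph D n).ediam :=
    hlb.trans SimpleGraph.edist_le_ediam
  have h1 : (nTotalGraph D n).ediam = (m : ℕ∞) := le_antisymm hediam_le hediam_ge
  have h2 : (nTotalGraph D n).edist 0 1 = (m : ℕ∞) := le_antisymm (hub 0 1) hlb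
  exact ⟨h1, by rw [h1, h2]⟩
end

section
/- Let R be an integral domain, k ≥ 2, and let P_1, …, P_k be prime ideals of R that are pairwise incomparable (for all i ≠ j, P_i ⊄ P_j and P_j ⊄ P_i). Let D = P_1 ∪ ⋯ ∪ P_k, let n ≥ 1 be an even integer, suppose there is u ∈ R with u^n = -1, and suppose R = (x_1, …, x_m) for some x_1, …, x_m ∈ D, where m is the minimum number of elements of D that generate R as an ideal. Then the n-total graph n-TG(R, D) is connected, its diameter equals m, and moreover the diameter equals the distance d(0, 1) between the vertices 0 and 1. -/
/-- A chain of vertices whose consecutive `n`-th power sums lie in `D` bounds the edistance. -/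
lemma nTG_chain_edist_le {R : Type*} [CommRing R] (D : Set R) (n : ℕ)
    (t : ℕ) (f : ℕ → R) (h : ∀ j < t, (f j) ^ n + (f (j+1)) ^ n ∈ D) :
    (nTotalGraph D n).edist (f 0) (f t) ≤ t := by
  induction t with
  | zero => simp [SimpleGraph.edist_self]
  | succ t ih =>
    have h1 : (nTotalGraph D n).edist (f t) (f (t+1)) ≤ 1 := by
      by_cases he : f t = f (t+1)
      · rw [he]; simp [SimpleGraph.edist_self]
      · have ha : (nTotalGraph D n).Adj (f t) (f (t+1)) :=
          ⟨he, h t (Nat.lt_succ_self t)⟩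
        calc (nTotalGraph D n).edist (f t) (f (t+1)) ≤ ha.toWalk.length :=
              SimpleGraph.Walk.edist_le _
          _ = 1 := by simp
    calc (nTotalGraph D n).edist (f 0) (f (t+1))
        ≤ (nTotalGraph D n).edist (f 0) (f t) + (nTotalGraph D n).edist (f t) (f (t+1)) :=
          SimpleGraph.edist_triangle
      _ ≤ (t : ℕ∞) + 1 := add_le_add (ih fun j hj => h j (hj.trans (Nat.lt_succ_self t))) h1
      _ = ((t+1 : ℕ) : ℕ∞) := by push_cast; ring

theorem stmt_14 {R : Type*} [CommRing R] [IsDomain R]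
    (k : ℕ) (hk : 2 ≤ k) (P : Fin k → Ideal R) (hprime : ∀ i, (P i).IsPrime)
    (hincomp : ∀ i j, i ≠ j → ¬ P i ≤ P j)
    (D : Set R) (hD : D = ⋃ i, (P i : Set R))
    (n : ℕ) (hn : 1 ≤ n) (heven : Even n) (hu : ∃ u : R, u ^ n = -1)
    (m : ℕ)
    (hgen : ∃ x : Fin m → R, (∀ i, x i ∈ D) ∧ Ideal.span (Set.range x) = ⊤)
    (hmin : ∀ j : ℕ, (∃ x : Fin j → R, (∀ i, x i ∈ D) ∧ Ideal.span (Set.range x) = ⊤) → m ≤ j) :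
    (nTotalGraph D n).Connected ∧
    (nTotalGraph D n).ediam = m ∧
    (nTotalGraph D n).ediam = (nTotalGraph D n).edist 0 1 := by
  obtain ⟨u, hun⟩ := hu
  set G := nTotalGraph D n with hG
  -- `D` is closed under multiplication by arbitrary ring elements
  have hDmul : ∀ (r d : R), d ∈ D → r * d ∈ D := by
    intro r d hd
    rw [hD] at hd ⊢
    obtain ⟨s, ⟨i, rfl⟩, hi⟩ := hd
    exact Set.mem_iUnion.2 ⟨i, Ideal.mul_mem_left _ r hi⟩
  -- if `a - b ∈ D` then `a^n - b^n ∈ D`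
  have hpowsub : ∀ a b : R, a - b ∈ D → a ^ n - b ^ n ∈ D := by
    intro a b hab
    rw [hD] at hab ⊢
    obtain ⟨s, ⟨i, rfl⟩, hi⟩ := hab
    obtain ⟨c, hc⟩ := sub_dvd_pow_sub_pow a b n
    refine Set.mem_iUnion.2 ⟨i, ?_⟩
    rw [hc]
    exact Ideal.mul_mem_right _ _ hi
  -- u is a unit with explicit inverse
  have hn0 : n ≠ 0 := by omega
  have huinv : u * (-u ^ (n-1)) = 1 := by
    have : u * u ^ (n-1) = u ^ n := by
      rw [← pow_succ']; congr 1; omega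
    rw [mul_neg, this, hun, neg_neg]
  set v : R := -u ^ (n-1) with hv
  -- decomposition of an arbitrary element as a sum of `m` elements of `D`
  obtain ⟨g, hgD, hgspan⟩ := hgen
  have hone : ∃ c : Fin m → R, ∑ i, c i * g i = 1 := by
    have : (1 : R) ∈ Ideal.span (Set.range g) := hgspan ▸ Submodule.mem_top
    obtain ⟨c, hc⟩ := (Submodule.mem_span_range_iff_exists_fun R).mp this
    exact ⟨c, by simpa [smul_eq_mul] using hc⟩
  obtain ⟨c, hc⟩ := hone
  -- universal upper bound on edistance
  have hub : ∀ x y : R, G.edist x y ≤ (m : ℕ∞) := by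
    intro x y
    set z : R := v ^ m * y - x with hz
    set d : ℕ → R := fun i => if h : i < m then z * (c ⟨i, h⟩ * g ⟨i, h⟩) else 0 with hd'
    have hdD : ∀ i < m, d i ∈ D := by
      intro i hi
      simp only [hd', dif_pos hi]
      exact hDmul _ _ (hDmul _ _ (hgD ⟨i, hi⟩))
    set s : ℕ → R := fun j => ∑ i ∈ Finset.range j, d i with hs
    have hsm : s m = z := by
      show (∑ i ∈ Finset.range m, d i) = z
      rw [Finset.sum_range]
      have hdi : ∀ i : Fin m, d i = z * (c i * g i) := fun i => by simp [hd', i.isLt]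
      rw [Finset.sum_congr rfl fun i _ => hdi i, ← Finset.mul_sum, hc, mul_one]
    set f : ℕ → R := fun j => u ^ j * (x + s j) with hf
    have hf0 : f 0 = x := by simp [hf, hs]
    have hfm : f m = y := by
      show u ^ m * (x + s m) = y
      rw [hsm, hz]
      calc u ^ m * (x + (v ^ m * y - x)) = (u * v) ^ m * y := by ring
        _ = y := by rw [huinv, one_pow, one_mul]
    have hstep : ∀ j < m, (f j) ^ n + (f (j+1)) ^ n ∈ D := by
      intro j hj
      have hsub : (x + s j) - (x + s (j+1)) ∈ D := by
        have : (x + s j) - (x + s (j+1)) = (-1) * d j := by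
          simp only [hs, Finset.sum_range_succ]; ring
        rw [this]
        exact hDmul _ _ (hdD j hj)
      have hmem : (x + s j) ^ n - (x + s (j+1)) ^ n ∈ D := hpowsub _ _ hsub
      have ekey : ∀ i : ℕ, (u ^ i) ^ n = (-1 : R) ^ i := by
        intro i; rw [← pow_mul, mul_comm, pow_mul, hun]
      have hkey : (f j) ^ n + (f (j+1)) ^ n
          = (-1 : R) ^ j * ((x + s j) ^ n - (x + s (j+1)) ^ n) := by
        have e1 : (f j) ^ n = (-1 : R) ^ j * (x + s j) ^ n := by
          show (u ^ j * (x + s j)) ^ n = _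
          rw [mul_pow, ekey]
        have e2 : (f (j+1)) ^ n = (-1 : R) ^ (j+1) * (x + s (j+1)) ^ n := by
          show (u ^ (j+1) * (x + s (j+1))) ^ n = _
          rw [mul_pow, ekey]
        rw [e1, e2, pow_succ]
        ring
      rw [hkey]
      exact hDmul _ _ hmem
    have := nTG_chain_edist_le D n m f hstep
    rwa [hf0, hfm] at this
  -- lower bound: any walk from 0 to 1 has length at least m
  have hlb : ∀ (w : G.Walk (0 : R) 1), m ≤ w.length := by
    intro w
    set t := w.length with ht
    set d : Fin t → R := fun i => (w.getVert i) ^ n + (w.getVert (i+1)) ^ n with hd'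
    have hdD : ∀ i, d i ∈ D := fun i => (w.adj_getVert_succ i.isLt).2
    set e : ℕ → R := fun i => (-1 : R) ^ i * (w.getVert i) ^ n with he
    have htel : ∑ i ∈ Finset.range t, (e i - e (i+1)) = e 0 - e t :=
      Finset.sum_range_sub' e t
    have hterm : ∀ (i : ℕ) (hi : i < t), e i - e (i+1) = (-1 : R) ^ i * d ⟨i, hi⟩ := by
      intro i hi
      simp only [he, hd', pow_succ]
      ring
    have hsum : ∑ i ∈ Finset.range t, (e i - e (i+1))
        ∈ Ideal.span (Set.range d) := by
      refine Ideal.sum_mem _ fun i hi => ?_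
      rw [Finset.mem_range] at hi
      rw [hterm i hi]
      exact Ideal.mul_mem_left _ _ (Ideal.subset_span ⟨⟨i, hi⟩, rfl⟩)
    rw [htel] at hsum
    have he0 : e 0 = 0 := by
      have : w.getVert 0 = 0 := w.getVert_zero
      simp [he, this, zero_pow hn0]
    have het : e t = (-1 : R) ^ t := by
      have : w.getVert t = 1 := w.getVert_length
      simp [he, this]
    rw [he0, het, zero_sub] at hsum
    have hunit : IsUnit (-(-1 : R) ^ t) := ((isUnit_one.neg).pow t).neg
    have hspan : Ideal.span (Set.range d) = ⊤ :=
      Ideal.eq_top_of_isUnit_mem _ hsum hunit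
    exact hmin t ⟨d, hdD, hspan⟩
  -- edist 0 1 = m
  have hne : G.edist (0 : R) 1 ≠ ⊤ := fun h => by
    have := hub 0 1
    rw [h] at this
    exact absurd this (by simp)
  have hreach : G.Reachable (0 : R) 1 := SimpleGraph.reachable_of_edist_ne_top hne
  obtain ⟨w, hw⟩ := hreach.exists_walk_length_eq_edist
  have hge : (m : ℕ∞) ≤ G.edist 0 1 := by
    rw [← hw]
    exact_mod_cast hlb w
  have hedist01 : G.edist (0 : R) 1 = m := le_antisymm (hub 0 1) hge
  -- conclusions
  have hconn : G.Connected := by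
    rw [SimpleGraph.connected_iff]
    refine ⟨fun x y => ?_, ⟨0⟩⟩
    exact SimpleGraph.reachable_of_edist_ne_top
      (fun h => by have := hub x y; rw [h] at this; exact absurd this (by simp))
  have hediam : G.ediam = m := by
    refine le_antisymm (SimpleGraph.ediam_le_of_edist_le fun x y => hub x y) ?_
    rw [← hedist01]
    exact SimpleGraph.edist_le_ediam
  exact ⟨hconn, hediam, by rw [hediam, hedist01]⟩
end

section
/- Let R be an integral domain, k ≥ 2, and let P_1, …, P_k be prime ideals of R that are pairwise incomparable; let D = P_1 ∪ ⋯ ∪ P_k and n ≥ 1. Suppose that the diameter of the n-total graph n-TG(R, D) is a finite number m ≥ 2 and that the distance between the vertices 0 and 1 equals m. Then the diameter of the subgraph of n-TG(R, D) induced on R \ D is at least m - 2. -/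
/-- step lemma: peel one edge off a geodesic -/
lemma step_lemma {V : Type*} {G : SimpleGraph V} {u v : V} {m : ℕ} (hm : 1 ≤ m)
    (h : G.edist u v = m) : ∃ w, G.Adj u w ∧ G.edist w v = ((m - 1 : ℕ) : ℕ∞) := by
  obtain ⟨p, hp⟩ := SimpleGraph.exists_walk_of_edist_eq_coe h
  have hnil : ¬ p.Nil := by
    rw [SimpleGraph.Walk.not_nil_iff_lt_length, hp]; omega
  refine ⟨p.getVert 1, p.adj_snd hnil, le_antisymm ?_ ?_⟩
  · have := SimpleGraph.edist_le p.tail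
    have hlen : p.tail.length = m - 1 := by
      have := SimpleGraph.Walk.length_tail_add_one hnil
      omega
    rwa [hlen] at this
  · have htri := SimpleGraph.edist_triangle (G := G) (u := u) (v := p.getVert 1) (w := v)
    have h1 : G.edist u (p.getVert 1) ≤ 1 := by
      have := ((p.adj_snd hnil).toWalk).edist_le
      simpa using this
    rw [h] at htri
    have h3 : (m : ℕ∞) ≤ 1 + G.edist (p.getVert 1) v :=
      htri.trans (add_le_add_left h1 _)
    calc ((m-1:ℕ):ℕ∞) = (m:ℕ∞) - 1 := by push_cast [ENat.coe_sub]; rfl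
      _ ≤ _ := tsub_le_iff_left.mpr h3

/-- edist in induced subgraph dominates ambient edist -/
lemma induce_edist_le {V : Type*} {G : SimpleGraph V} {s : Set V} (a b : s) :
    G.edist a b ≤ (G.induce s).edist a b := by
  rcases eq_or_ne ((G.induce s).edist a b) ⊤ with h | h
  · simp [h]
  · obtain ⟨p, hp⟩ := SimpleGraph.exists_walk_of_edist_ne_top h
    calc G.edist a b
        ≤ ((p.map (⟨Subtype.val, fun h => h⟩ : G.induce s →g G)).length : ℕ∞) :=
          (p.map _).edist_le
      _ = (p.length : ℕ∞) := by rw [SimpleGraph.Walk.length_map]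
      _ = _ := hp

theorem stmt_15 {R : Type*} [CommRing R] [IsDomain R]
    (k : ℕ) (hk : 2 ≤ k) (P : Fin k → Ideal R) (hprime : ∀ i, (P i).IsPrime)
    (hincomp : ∀ i j, i ≠ j → ¬ P i ≤ P j)
    (D : Set R) (hD : D = ⋃ i, (P i : Set R))
    (n : ℕ) (hn : 1 ≤ n)
    (m : ℕ) (hm : 2 ≤ m)
    (hdiam : (nTotalGraph D n).ediam = m)
    (hdist : (nTotalGraph D n).edist 0 1 = m) :
    ((m : ℕ∞) - 2) ≤ ((nTotalGraph D n).induce Dᶜ).ediam := by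
  set G := nTotalGraph D n with hG
  -- D is closed under nth powers membership: x ∈ D → x^n ∈ D, and x^n ∈ D → relevant
  have hDpow : ∀ x : R, x ∈ D → x ^ n ∈ D := by
    intro x hx
    rw [hD] at hx ⊢
    obtain ⟨_, ⟨i, rfl⟩, hxi⟩ := hx
    exact Set.mem_iUnion.mpr ⟨i, Ideal.pow_mem_of_mem _ hxi n hn⟩
  have h1D : (1 : R) ∉ D := by
    rw [hD]
    intro h1
    obtain ⟨_, ⟨i, rfl⟩, hi⟩ := h1
    exact (hprime i).ne_top (Ideal.eq_top_of_isUnit_mem _ hi isUnit_one)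
  -- peel two steps
  obtain ⟨u, hu0, hu⟩ := step_lemma (by omega) hdist
  obtain ⟨w, huw, hw⟩ := step_lemma (m := m - 1) (by omega) hu
  have hw2 : G.edist w 1 = ((m - 2 : ℕ) : ℕ∞) := by
    rw [hw]; norm_cast
  -- w ∉ D
  have hwD : w ∉ D := by
    intro hwD
    have hle : G.edist 0 w ≤ 1 := by
      rcases eq_or_ne w 0 with rfl | hw0
      · simp
      · have hadj : G.Adj 0 w := by rw [hG]; exact ⟨fun h => hw0 h.symm, by
          rw [zero_pow (by omega : n ≠ 0), zero_add]; exact hDpow w hwD⟩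
        have := hadj.toWalk.edist_le
        simpa using this
    have htri := SimpleGraph.edist_triangle (G := G) (u := 0) (v := w) (w := 1)
    rw [hdist, hw2] at htri
    have : (m : ℕ∞) ≤ 1 + ((m-2:ℕ):ℕ∞) := htri.trans (add_le_add_left hle _)
    rw [← Nat.cast_one, ← Nat.cast_add, Nat.cast_le] at this
    omega
  -- conclude
  have key : ((m - 2 : ℕ) : ℕ∞) ≤ ((nTotalGraph D n).induce Dᶜ).ediam := by
    calc ((m - 2 : ℕ) : ℕ∞) = G.edist w 1 := hw2.symm
      _ ≤ (G.induce Dᶜ).edist ⟨w, hwD⟩ ⟨1, h1D⟩ := induce_edist_le _ _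
      _ ≤ _ := SimpleGraph.edist_le_ediam
  rw [ENat.coe_sub] at key
  simpa using key
end

section
/- Let k ≥ 2 and let R = R_1 × ⋯ × R_k be a product of integral domains (R = Π_{t ∈ Fin k} R_t). Let D = ⋃_s Q_s be a union of prime ideals Q_s of R, and suppose there are two indices i ≠ j in Fin k, a prime ideal P_i of R_i, and a prime ideal P_j of R_j such that {x ∈ R : x_i ∈ P_i} and {x ∈ R : x_j ∈ P_j} both occur among the Q_s. If n ≥ 1 is an odd integer, then the n-total graph n-TG(R, D) is connected and its diameter equals 2. -/
theorem stmt_17 (k : ℕ) (hk : 2 ≤ k) (R : Fin k → Type*)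
    [∀ t, CommRing (R t)] [∀ t, IsDomain (R t)]
    {ι : Type*} (Q : ι → Ideal (∀ t, R t)) (hprime : ∀ s, (Q s).IsPrime)
    (D : Set (∀ t, R t)) (hD : D = ⋃ s, (Q s : Set (∀ t, R t)))
    (i j : Fin k) (hij : i ≠ j)
    (Pi' : Ideal (R i)) (hPi : Pi'.IsPrime)
    (Pj' : Ideal (R j)) (hPj : Pj'.IsPrime)
    (s₁ s₂ : ι)
    (hs₁ : Q s₁ = Pi'.comap (Pi.evalRingHom R i))
    (hs₂ : Q s₂ = Pj'.comap (Pi.evalRingHom R j))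
    (n : ℕ) (hn : 1 ≤ n) (hodd : Odd n) :
    (nTotalGraph D n).Connected ∧ (nTotalGraph D n).ediam = 2 := by
  set G := nTotalGraph D n with hG
  -- membership criteria
  have hmem₁ : ∀ x : ∀ t, R t, x i ∈ Pi' → x ∈ D := by
    intro x hx
    rw [hD]
    exact Set.mem_iUnion.mpr ⟨s₁, by rw [hs₁]; exact hx⟩
  have hmem₂ : ∀ x : ∀ t, R t, x j ∈ Pj' → x ∈ D := by
    intro x hx
    rw [hD]
    exact Set.mem_iUnion.mpr ⟨s₂, by rw [hs₂]; exact hx⟩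
  -- key: every distinct pair has edist ≤ 2
  have key : ∀ x y : ∀ t, R t, x ≠ y → G.edist x y ≤ 2 := by
    intro x y hxy
    by_cases hadj : G.Adj x y
    · calc G.edist x y = 1 := SimpleGraph.edist_eq_one_iff_adj.mpr hadj
        _ ≤ 2 := by norm_num
    · set z : ∀ t, R t := Function.update (fun t => -y t) i (-(x i)) with hz
      have hzi : z i = -(x i) := Function.update_self _ _ _
      have hzj : z j = -(y j) := Function.update_of_ne (Ne.symm hij) _ _
      have hxz : x ≠ z := by
        intro h
        apply hadj
        refine ⟨hxy, hmem₂ _ ?_⟩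
        have : x j = -(y j) := by rw [h, hzj]
        simp only [Pi.add_apply, Pi.pow_apply, this, hodd.neg_pow, neg_add_cancel]
        exact Pj'.zero_mem
      have hzy : z ≠ y := by
        intro h
        apply hadj
        refine ⟨hxy, hmem₁ _ ?_⟩
        have : y i = -(x i) := by rw [← h, hzi]
        simp only [Pi.add_apply, Pi.pow_apply, this, hodd.neg_pow, add_neg_cancel]
        exact Pi'.zero_mem
      have e₁ : G.Adj x z := by
        refine ⟨hxz, hmem₁ _ ?_⟩
        simp only [Pi.add_apply, Pi.pow_apply, hzi, hodd.neg_pow, add_neg_cancel]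
        exact Pi'.zero_mem
      have e₂ : G.Adj z y := by
        refine ⟨hzy, hmem₂ _ ?_⟩
        simp only [Pi.add_apply, Pi.pow_apply, hzj, hodd.neg_pow, neg_add_cancel]
        exact Pj'.zero_mem
      calc G.edist x y ≤ G.edist x z + G.edist z y := SimpleGraph.edist_triangle
        _ ≤ 1 + 1 := add_le_add
            (le_of_eq (SimpleGraph.edist_eq_one_iff_adj.mpr e₁))
            (le_of_eq (SimpleGraph.edist_eq_one_iff_adj.mpr e₂))
        _ = 2 := by norm_num
  have hiK : Nonempty (Fin k) := ⟨i⟩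
  have hconn : G.Connected := by
    rw [SimpleGraph.connected_iff]
    refine ⟨fun x y => ?_, ⟨fun t => 0⟩⟩
    by_cases hxy : x = y
    · exact hxy ▸ SimpleGraph.Reachable.refl x
    · exact SimpleGraph.reachable_of_edist_ne_top
        (fun h => by have := key x y hxy; rw [h] at this; exact absurd this (by norm_num))
  refine ⟨hconn, le_antisymm ?_ ?_⟩
  · rw [SimpleGraph.ediam_le_iff]
    intro u v
    by_cases huv : u = v
    · simp [huv, SimpleGraph.edist_self]
    · exact key u v huv
  · -- 1 and 0 are distinct and not adjacent
    have h10 : (1 : ∀ t, R t) ≠ 0 := fun h => one_ne_zero (congrFun h i)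
    have hnadj : ¬ G.Adj 1 0 := by
      rintro ⟨-, hd⟩
      rw [hD, Set.mem_iUnion] at hd
      obtain ⟨s, hs⟩ := hd
      have h1 : (1 : ∀ t, R t) ^ n + 0 ^ n = 1 := by
        rw [one_pow, zero_pow (by omega), add_zero]
      rw [h1] at hs
      exact (hprime s).ne_top ((Ideal.eq_top_iff_one _).mpr hs)
    have hge : 2 ≤ G.edist 1 0 := by
      have hne0 : G.edist 1 0 ≠ 0 := SimpleGraph.edist_eq_zero_iff.ne.mpr h10
      have hne1 : G.edist 1 0 ≠ 1 := fun h =>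
        hnadj (SimpleGraph.edist_eq_one_iff_adj.mp h)
      have := SimpleGraph.edist_pos_of_ne (G := G) h10
      -- edist is in ℕ∞; if ≠ 0 and ≠ 1 then ≥ 2
      rcases eq_top_or_lt_top (G.edist 1 0) with h | h
      · rw [h]; exact le_top
      · lift G.edist 1 0 to ℕ using h.ne with m hm
        have : m ≠ 0 := by exact_mod_cast hne0
        have : m ≠ 1 := by exact_mod_cast hne1
        exact_mod_cast by omega
    exact le_trans hge SimpleGraph.edist_le_ediam
end

section
/- Let k ≥ 2 and let R = R_1 × ⋯ × R_k be a product of integral domains (R = Π_{t ∈ Fin k} R_t). Let D = ⋃_s Q_s be a union of prime ideals Q_s of R, and suppose there are two indices i ≠ j in Fin k, a prime ideal P_i of R_i, and a prime ideal P_j of R_j such that {x ∈ R : x_i ∈ P_i} and {x ∈ R : x_j ∈ P_j} both occur among the Q_s. If n ≥ 1 is an even integer and there exists u ∈ R with u^n = -1, then the n-total graph n-TG(R, D) is connected and its diameter equals 2. -/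
theorem stmt_18 (k : ℕ) (hk : 2 ≤ k) (R : Fin k → Type*)
    [∀ t, CommRing (R t)] [∀ t, IsDomain (R t)]
    {ι : Type*} (Q : ι → Ideal (∀ t, R t)) (hprime : ∀ s, (Q s).IsPrime)
    (D : Set (∀ t, R t)) (hD : D = ⋃ s, (Q s : Set (∀ t, R t)))
    (i j : Fin k) (hij : i ≠ j)
    (Pi' : Ideal (R i)) (hPi : Pi'.IsPrime)
    (Pj' : Ideal (R j)) (hPj : Pj'.IsPrime)
    (s₁ s₂ : ι)
    (hs₁ : Q s₁ = Pi'.comap (Pi.evalRingHom R i))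
    (hs₂ : Q s₂ = Pj'.comap (Pi.evalRingHom R j))
    (n : ℕ) (hn : 1 ≤ n) (heven : Even n)
    (hu : ∃ u : ∀ t, R t, u ^ n = -1) :
    (nTotalGraph D n).Connected ∧ (nTotalGraph D n).ediam = 2 := by
  obtain ⟨u, hun⟩ := hu
  set G := nTotalGraph D n with hG
  have hui : u i ^ n = -1 := by
    have := congrFun hun i; simpa using this
  have huj : u j ^ n = -1 := by
    have := congrFun hun j; simpa using this
  -- D contains Q s₁ and Q s₂
  have hQ₁ : ∀ w : ∀ t, R t, w i ∈ Pi' → w ∈ D := by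
    intro w hw
    rw [hD]
    exact Set.mem_iUnion.2 ⟨s₁, by rw [hs₁]; exact hw⟩
  have hQ₂ : ∀ w : ∀ t, R t, w j ∈ Pj' → w ∈ D := by
    intro w hw
    rw [hD]
    exact Set.mem_iUnion.2 ⟨s₂, by rw [hs₂]; exact hw⟩
  -- key: any two distinct vertices are adjacent or joined by a path of length 2
  have key : ∀ x y : ∀ t, R t, x ≠ y →
      G.Adj x y ∨ ∃ z, G.Adj x z ∧ G.Adj z y := by
    intro x y hxy
    set z : ∀ t, R t := Function.update (fun t => u t * x t) j (u j * y j) with hz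
    by_cases hzx : z = x
    · left
      refine ⟨hxy, hQ₂ _ ?_⟩
      have hj : x j = u j * y j := by
        have := congrFun hzx j
        rw [hz, Function.update_self] at this
        exact this.symm
      have : (x ^ n + y ^ n) j = 0 := by
        simp only [Pi.add_apply, Pi.pow_apply, hj, mul_pow, huj]
        ring
      rw [this]; exact Pj'.zero_mem
    by_cases hzy : z = y
    · left
      refine ⟨hxy, hQ₁ _ ?_⟩
      have hi : y i = u i * x i := by
        have := congrFun hzy i
        rw [hz, Function.update_of_ne hij] at this
        exact this.symm
      have : (x ^ n + y ^ n) i = 0 := by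
        simp only [Pi.add_apply, Pi.pow_apply, hi, mul_pow, hui]
        ring
      rw [this]; exact Pi'.zero_mem
    · right
      refine ⟨z, ⟨Ne.symm hzx, hQ₁ _ ?_⟩, ⟨hzy, hQ₂ _ ?_⟩⟩
      · have hzi : z i = u i * x i := Function.update_of_ne hij _ _
        have : (x ^ n + z ^ n) i = 0 := by
          simp only [Pi.add_apply, Pi.pow_apply, hzi, mul_pow, hui]
          ring
        rw [this]; exact Pi'.zero_mem
      · have hzj : z j = u j * y j := Function.update_self _ _ _
        have : (z ^ n + y ^ n) j = 0 := by
          simp only [Pi.add_apply, Pi.pow_apply, hzj, mul_pow, huj]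
          ring
        rw [this]; exact Pj'.zero_mem
  have hdist : ∀ x y : ∀ t, R t, G.edist x y ≤ 2 := by
    intro x y
    by_cases hxy : x = y
    · subst hxy; simp [SimpleGraph.edist_self]
    · rcases key x y hxy with h | ⟨z, h1, h2⟩
      · calc G.edist x y ≤ (h.toWalk).length := SimpleGraph.edist_le _
          _ ≤ 2 := by simp
      · calc G.edist x y ≤ ((h1.toWalk.append h2.toWalk)).length :=
              SimpleGraph.edist_le _
          _ ≤ 2 := by simp
  have hconn : G.Connected := by
    rw [SimpleGraph.connected_iff]
    refine ⟨fun x y => ?_, ⟨0⟩⟩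
    by_cases hxy : x = y
    · subst hxy; exact SimpleGraph.Reachable.refl x
    · rcases key x y hxy with h | ⟨z, h1, h2⟩
      · exact h.reachable
      · exact h1.reachable.trans h2.reachable
  refine ⟨hconn, le_antisymm (SimpleGraph.ediam_le_of_edist_le hdist) ?_⟩
  -- 0 and 1 are distinct and not adjacent
  have h01 : (0 : ∀ t, R t) ≠ 1 := by
    intro h
    exact one_ne_zero (congrFun h i).symm
  have hnadj : ¬ G.Adj 0 1 := by
    rintro ⟨-, hmem⟩
    rw [hD] at hmem
    obtain ⟨s, hs⟩ := Set.mem_iUnion.1 hmem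
    have h1 : (1 : ∀ t, R t) ∈ Q s := by
      have : (0 : ∀ t, R t) ^ n + 1 ^ n = 1 := by
        rw [zero_pow (by omega : n ≠ 0), one_pow, zero_add]
      rwa [this] at hs
    exact (hprime s).1 ((Ideal.eq_top_iff_one _).2 h1)
  have h1lt : 1 < G.edist 0 1 := by
    refine lt_of_le_of_ne ?_ ?_
    · exact Order.one_le_iff_pos.mpr (SimpleGraph.edist_pos_of_ne h01)
    · intro h
      exact hnadj (SimpleGraph.edist_eq_one_iff_adj.1 h.symm)
  calc (2 : ℕ∞) = 1 + 1 := by norm_num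
    _ ≤ G.edist 0 1 := Order.add_one_le_of_lt h1lt
    _ ≤ G.ediam := SimpleGraph.edist_le_ediam
end
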